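/- arXiv:1711.08731 — 8 statements merged into one kernel-verified Lean document; each statement's English description precedes it below -/
import Mathlib

section
/- Let m : Fin p → ℕ be block sizes with p ≥ 1, and let α, β ≥ 0 with γ = β. Define the ordered-tree completion cost recursively: a singleton costs 0, and a tree over a consecutive range splits into two consecutive subranges with cost max of the two subtree costs plus α + β·(size of the sent subrange). Then for every p ≥ 1 there exists such a recursive tree over the full range [0, p) with completion cost at most ⌈log₂ p⌉·α + β·(∑ i, m i). -/
/-!
Split the range into a left half of `⌈n/2⌉` processors and a right half of `⌊n/2⌋`, build
trees on both halves recursively, and let the half holding less data send to the other one.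
Both subtrees finish within `⌈log₂ ⌈n/2⌉⌉ α + β · max(S_L, S_R)`, and the final message adds
`α + β · min(S_L, S_R)`; since `max + min = S_L + S_R` and `⌈log₂ n⌉ = ⌈log₂ ⌈n/2⌉⌉ + 1`, the
bound propagates.
-/

open Finset

/-- `OrdCost m α β i j c` holds when there is a (strongly) ordered gather/scatter
communication tree over the consecutive processor range `[i, j]` with completion cost `c`:
a singleton range costs `0`, and a range splits into two consecutive subranges, costing
the maximum of the two subtree costs plus `α + β * (size of the sent subrange)`
(the sent subrange may be either the right or the left part). -/
inductive OrdCost (m : ℕ → ℕ) (α β : ℝ) : ℕ → ℕ → ℝ → Prop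
  | single (i : ℕ) : OrdCost m α β i i 0
  | joinRight {i k j : ℕ} {c₁ c₂ : ℝ} (hik : i ≤ k) (hkj : k < j)
      (h₁ : OrdCost m α β i k c₁) (h₂ : OrdCost m α β (k + 1) j c₂) :
      OrdCost m α β i j (max c₁ c₂ + α + β * ∑ t ∈ Icc (k + 1) j, (m t : ℝ))
  | joinLeft {i k j : ℕ} {c₁ c₂ : ℝ} (hik : i ≤ k) (hkj : k < j)
      (h₁ : OrdCost m α β i k c₁) (h₂ : OrdCost m α β (k + 1) j c₂) :
      OrdCost m α β i j (max c₁ c₂ + α + β * ∑ t ∈ Icc i k, (m t : ℝ))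

theorem Finset.sum_Icc_consecutive {M : Type*} [AddCommMonoid M] (f : ℕ → M) {i k j : ℕ}
    (hik : i ≤ k) (hkj : k ≤ j) :
    ∑ t ∈ Icc i k, f t + ∑ t ∈ Icc (k + 1) j, f t = ∑ t ∈ Icc i j, f t := by
  simp only [← Ico_add_one_right_eq_Icc]
  exact sum_Ico_consecutive f (by omega) (by omega)

namespace OrdCost

variable {m : ℕ → ℕ} {α β : ℝ}

theorem join_min {i k j : ℕ} {c₁ c₂ : ℝ} (hik : i ≤ k) (hkj : k < j)
    (h₁ : OrdCost m α β i k c₁) (h₂ : OrdCost m α β (k + 1) j c₂) :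
    OrdCost m α β i j (max c₁ c₂ + α +
      β * min (∑ t ∈ Icc i k, (m t : ℝ)) (∑ t ∈ Icc (k + 1) j, (m t : ℝ))) := by
  rcases le_total (∑ t ∈ Icc i k, (m t : ℝ)) (∑ t ∈ Icc (k + 1) j, (m t : ℝ)) with hle | hle
  · rw [min_eq_left hle]
    exact joinLeft hik hkj h₁ h₂
  · rw [min_eq_right hle]
    exact joinRight hik hkj h₁ h₂

theorem exists_le_clog (hα : 0 ≤ α) (hβ : 0 ≤ β) {i j : ℕ} (hij : i ≤ j) :
    ∃ c, OrdCost m α β i j c ∧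
      c ≤ Nat.clog 2 (j + 1 - i) * α + β * ∑ t ∈ Icc i j, (m t : ℝ) := by
  induction hd : j - i using Nat.strong_induction_on generalizing i j with
  | _ d ih =>
    rcases hij.eq_or_lt with rfl | hlt
    · exact ⟨0, single i, by simp [hβ, mul_nonneg]⟩
    set k := (i + j) / 2
    obtain ⟨c₁, h₁, hc₁⟩ := ih (k - i) (by omega) (i := i) (j := k) (by omega) rfl
    obtain ⟨c₂, h₂, hc₂⟩ := ih (j - (k + 1)) (by omega) (i := k + 1) (j := j) (by omega) rfl
    set SL := ∑ t ∈ Icc i k, (m t : ℝ)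
    set SR := ∑ t ∈ Icc (k + 1) j, (m t : ℝ)
    have hclog : Nat.clog 2 (j + 1 - i) = Nat.clog 2 (k + 1 - i) + 1 := by
      rw [Nat.clog_of_two_le one_lt_two (by omega)]
      congr 2
      omega
    have hclog_right : (Nat.clog 2 (j + 1 - (k + 1)) : ℝ) ≤ Nat.clog 2 (k + 1 - i) := by
      exact_mod_cast Nat.clog_mono_right 2 (by omega)
    have hmax : max c₁ c₂ ≤ Nat.clog 2 (k + 1 - i) * α + β * max SL SR := by
      refine max_le (hc₁.trans ?_) (hc₂.trans ?_)
      · gcongr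
        exact le_max_left _ _
      · gcongr
        exact le_max_right _ _
    refine ⟨_, join_min (by omega) (by omega) h₁ h₂, ?_⟩
    rw [← sum_Icc_consecutive _ (by omega : i ≤ k) (by omega : k ≤ j), hclog,
      ← max_add_min SL SR]
    push_cast
    linarith

end OrdCost

theorem stmt_1_general (p : ℕ) (hp : 1 ≤ p) (m : ℕ → ℕ) (α β : ℝ)
    (hα : 0 ≤ α) (hβ : 0 ≤ β) :
    ∃ c : ℝ, OrdCost m α β 0 (p - 1) c ∧
      c ≤ (Nat.clog 2 p : ℝ) * α + β * ∑ i ∈ range p, (m i : ℝ) := by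
  obtain ⟨c, hc, hle⟩ := OrdCost.exists_le_clog (m := m) hα hβ (Nat.zero_le (p - 1))
  rw [Nat.sub_add_cancel hp, Nat.sub_zero, ← Ico_add_one_right_eq_Icc, Nat.sub_add_cancel hp,
    ← range_eq_Ico] at hle
  exact ⟨c, hc, hle⟩

/-- Proposition 1: for every `p ≥ 1` there is an ordered recursive (adaptive binomial)
tree over the full range `[0, p)` with completion cost at most
`⌈log₂ p⌉ * α + β * ∑ i, m i`. -/
theorem stmt_1 (p : ℕ) (hp : 1 ≤ p) (m : ℕ → ℕ) (α β γ : ℝ)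
    (hα : 0 ≤ α) (hβ : 0 ≤ β) (hγ : γ = β) :
    ∃ c : ℝ, OrdCost m α β 0 (p - 1) c ∧
      c ≤ (Nat.clog 2 p : ℝ) * α + β * ∑ i ∈ range p, (m i : ℝ) :=
  stmt_1_general p hp m α β hα hβ
end

section
/- Let m_i (0 ≤ i < p, p ≥ 3) be positive integers with m = ∑ m_i, each m_i < ⌊m/2⌋, and let β = γ = 1 and 0 < α. In any gather tree, if the root has exactly one child, the completion cost is at least m + 1 + α; if it has at least two children, the completion cost is at least m + 2α. Hence in particular if α < 1 every gather tree has cost at least m + 2α. -/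
open Finset

/-- A gather tree over processors `Fin n`, written in binary-join form: `node t s` means the
root of `t` (which is also the root of the combined tree) receives, as its last communication,
the whole data segment gathered in the subtree `s` from the root of `s`. -/
inductive GTree (n : ℕ) : Type where
  | leaf : Fin n → GTree n
  | node : GTree n → GTree n → GTree n

namespace GTree

/-- The root processor of a gather tree. -/
def root {n : ℕ} : GTree n → Fin n
  | leaf i => i
  | node t _ => t.root

/-- The set of processors spanned by a gather tree. -/
def members {n : ℕ} : GTree n → Finset (Fin n)
  | leaf i => {i}
  | node t s => t.members ∪ s.members

/-- A gather tree is valid if each processor occurs at most once in it. -/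
def valid {n : ℕ} : GTree n → Prop
  | leaf _ => True
  | node t s => t.valid ∧ s.valid ∧ Disjoint t.members s.members

/-- Total size of the data blocks gathered in a tree. -/
def size {n : ℕ} (m : Fin n → ℝ) : GTree n → ℝ
  | leaf i => m i
  | node t s => t.size m + s.size m

/-- Completion time (cost) of a gather tree under the one-ported linear cost model:
a singleton subtree accounts for the local copy `γ * m i` of its processor's own block,
and a join costs the maximum of the two subtree completion times plus the transmission
time `α + β * Size(sent subtree)`. -/
def cost {n : ℕ} (α β γ : ℝ) (m : Fin n → ℝ) : GTree n → ℝ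
  | leaf i => γ * m i
  | node t s => max (t.cost α β γ m) (s.cost α β γ m) + α + β * s.size m

/-- Number of children of the root of the tree. -/
def rootDeg {n : ℕ} : GTree n → ℕ
  | leaf _ => 0
  | node t _ => t.rootDeg + 1

end GTree


namespace GTree

lemma size_nonneg' {n : ℕ} {m : Fin n → ℝ} (hm : ∀ i, 0 ≤ m i) :
    ∀ T : GTree n, 0 ≤ T.size m := by
  intro T
  induction T with
  | leaf i => simpa [GTree.size] using hm i
  | node t s iht ihs => simp only [GTree.size]; linarith

lemma cost_ge' {n : ℕ} {α : ℝ} (hα : 0 ≤ α) {m : Fin n → ℝ} (hm : ∀ i, 0 ≤ m i) :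
    ∀ T : GTree n, T.size m + T.rootDeg * α ≤ T.cost α 1 1 m := by
  intro T
  induction T with
  | leaf i => simp [GTree.size, GTree.cost, GTree.rootDeg]
  | node t s iht ihs =>
    simp only [GTree.size, GTree.cost, GTree.rootDeg]
    have h1 := size_nonneg' hm s
    have h2 := le_max_left (t.cost α 1 1 m) (s.cost α 1 1 m)
    push_cast
    nlinarith

lemma size_eq' {n : ℕ} {m : Fin n → ℝ} :
    ∀ T : GTree n, T.valid → T.size m = ∑ i ∈ T.members, m i := by
  intro T
  induction T with
  | leaf i => simp [GTree.size, GTree.members]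
  | node t s iht ihs =>
    rintro ⟨hvt, hvs, hd⟩
    simp [GTree.size, GTree.members, iht hvt, ihs hvs, Finset.sum_union hd]

end GTree

/-- Lemma (two children): for a gather problem of size `M = ∑ m i` over at least three
processors, each block a positive integer `< ⌊M/2⌋`, with `β = γ = 1` and `0 < α`:
if the root has exactly one child the completion cost is at least `M + 1 + α`; if it has
at least two children the cost is at least `M + 2α`; hence if `α < 1` every gather tree
has cost at least `M + 2α`. -/
theorem stmt_2 (p : ℕ) (hp : 3 ≤ p) (m : Fin p → ℕ) (hpos : ∀ i, 0 < m i)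
    (M : ℕ) (hM : M = ∑ i, m i) (hsmall : ∀ i, m i < M / 2)
    (α : ℝ) (hα : 0 < α)
    (T : GTree p) (hv : T.valid) (hspan : T.members = Finset.univ) :
    (T.rootDeg = 1 → (M : ℝ) + 1 + α ≤ T.cost α 1 1 (fun i => (m i : ℝ))) ∧
    (2 ≤ T.rootDeg → (M : ℝ) + 2 * α ≤ T.cost α 1 1 (fun i => (m i : ℝ))) ∧
    (α < 1 → (M : ℝ) + 2 * α ≤ T.cost α 1 1 (fun i => (m i : ℝ))) := by
  set mr : Fin p → ℝ := fun i => (m i : ℝ) with hmr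
  have hm0 : ∀ i, 0 ≤ mr i := fun i => Nat.cast_nonneg _
  have hsize : T.size mr = (M : ℝ) := by
    rw [GTree.size_eq' T hv, hspan, hM]; push_cast; rfl
  have hcost := GTree.cost_ge' hα.le hm0 T
  have key2 : 2 ≤ T.rootDeg → (M : ℝ) + 2 * α ≤ T.cost α 1 1 mr := by
    intro h2
    have h2' : (2 : ℝ) ≤ (T.rootDeg : ℝ) := by exact_mod_cast h2
    nlinarith
  have key1 : T.rootDeg = 1 → (M : ℝ) + 1 + α ≤ T.cost α 1 1 mr := by
    intro h1
    cases T with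
    | leaf i => simp [GTree.rootDeg] at h1
    | node t s =>
      have ht0 : t.rootDeg = 0 := by simpa [GTree.rootDeg] using h1
      cases t with
      | node a b => simp [GTree.rootDeg] at ht0
      | leaf r =>
        obtain ⟨hvt, hvs, hd⟩ := hv
        have hsum : mr r + s.size mr = (M : ℝ) := by
          have : (GTree.node (GTree.leaf r) s).size mr = (M : ℝ) := hsize
          simpa [GTree.size] using this
        have hcosts := GTree.cost_ge' hα.le hm0 s
        have hsn : (0:ℝ) ≤ (s.rootDeg : ℝ) * α :=
          mul_nonneg (Nat.cast_nonneg _) hα.le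
        have hr : (mr r) + 1 ≤ s.size mr := by
          have h1 : 2 * m r + 2 ≤ M := by
            have := hsmall r
            omega
          have h2 : 2 * (mr r) + 2 ≤ (M : ℝ) := by simp only [hmr]; exact_mod_cast h1
          linarith
        have hmax : mr r + 1 ≤ max ((GTree.leaf r).cost α 1 1 mr) (s.cost α 1 1 mr) := by
          have : mr r + 1 ≤ s.cost α 1 1 mr := by linarith
          exact le_trans this (le_max_right _ _)
        simp only [GTree.cost] at hmax ⊢
        linarith
  refine ⟨key1, key2, ?_⟩
  intro hα1
  by_cases h1 : T.rootDeg = 1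
  · have := key1 h1; linarith
  · by_cases h0 : T.rootDeg = 0
    · exfalso
      cases T with
      | node t s => simp [GTree.rootDeg] at h0
      | leaf i =>
        have : ({i} : Finset (Fin p)).card = (Finset.univ : Finset (Fin p)).card := by
          rw [← hspan]; rfl
        simp at this
        omega
    · exact key2 (by omega)
end

section
/- Let x < y be positive integers, p ≥ 2, α, β > 0 with γ = β, and suppose ⌈log₂(p−1)⌉·α + β·(p−1)·x ≤ β·y. Consider a gather problem with one block of size y (at processor r) and p−1 blocks of size x, total m = (p−1)x + y. Then there exists a gather tree of completion cost exactly α + β·m, every gather tree has cost at least α + β·m, and α + β·m < ⌈log₂ p⌉·α + β·m (provided ⌈log₂ p⌉ ≥ 2, i.e., p ≥ 3). -/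
/-!
With `γ = β` every block is paid for at rate `β` at least once, by its local copy or inside a
message, and each message to the root costs a further `α`; following the first subtrees gives
`cost T ≥ α · rootDeg T + β · size T`, and a tree on `p ≥ 2` processors has `rootDeg T ≥ 1`.
The bound is attained by never sending the large block: the root copies it locally while a
balanced binary tree gathers the `p - 1` small blocks within `⌈log₂ (p-1)⌉ α + β (p-1) x ≤ β y`,
and one message of size `(p - 1) x` completes the gather.
-/

open Finset

namespace GTree

variable {n : ℕ}

theorem size_eq_sum_members (m : Fin n → ℝ) : ∀ {T : GTree n}, T.valid →
    T.size m = ∑ i ∈ T.members, m i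
  | leaf i, _ => by simp [size, members]
  | node t s, ⟨ht, hs, hts⟩ => by
    rw [size, members, sum_union hts, size_eq_sum_members m ht, size_eq_sum_members m hs]

theorem size_eq_card_mul {m : Fin n → ℝ} {x : ℝ} {T : GTree n} (hT : T.valid)
    (hm : ∀ i ∈ T.members, m i = x) : T.size m = #T.members * x := by
  rw [size_eq_sum_members m hT, sum_congr rfl hm, sum_const, nsmul_eq_mul]

theorem mul_rootDeg_add_mul_size_le_cost (α β : ℝ) (m : Fin n → ℝ) :
    ∀ T : GTree n, α * T.rootDeg + β * T.size m ≤ T.cost α β β m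
  | leaf _ => by simp [rootDeg, size, cost]
  | node t s => by
    have := (mul_rootDeg_add_mul_size_le_cost α β m t).trans (le_max_left _ (s.cost α β β m))
    rw [rootDeg, size, cost]
    push_cast
    linarith

theorem rootDeg_pos_of_one_lt_card {T : GTree n} (hT : 1 < #T.members) : 0 < T.rootDeg := by
  cases T with
  | leaf i => simp [members] at hT
  | node t s => exact Nat.succ_pos _

theorem add_mul_sum_le_cost {α : ℝ} (hα : 0 ≤ α) (β : ℝ) (m : Fin n → ℝ) {T : GTree n}
    (hT : T.valid) (hcard : 1 < #T.members) :
    α + β * ∑ i ∈ T.members, m i ≤ T.cost α β β m := by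
  have hdeg : (1 : ℝ) ≤ T.rootDeg := by exact_mod_cast rootDeg_pos_of_one_lt_card hcard
  rw [← size_eq_sum_members m hT]
  nlinarith [mul_rootDeg_add_mul_size_le_cost α β m T]

theorem cost_node_leaf {α β γ : ℝ} {m : Fin n → ℝ} {r : Fin n} {S : GTree n}
    (hS : S.cost α β γ m ≤ γ * m r) :
    (node (leaf r) S).cost α β γ m = γ * m r + α + β * S.size m := by
  rw [cost, cost, max_eq_left hS]

theorem exists_cost_le_clog {α β x : ℝ} (hα : 0 ≤ α) (hβ : 0 ≤ β) (hx : 0 ≤ x)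
    {m : Fin n → ℝ} (F : Finset (Fin n)) (hF : F.Nonempty) (hmF : ∀ i ∈ F, m i = x) :
    ∃ S : GTree n, S.valid ∧ S.members = F ∧
      S.cost α β β m ≤ Nat.clog 2 #F * α + β * (#F * x) := by
  induction F using Finset.strongInduction with
  | H F ih =>
  by_cases hF1 : #F = 1
  · obtain ⟨i, rfl⟩ := card_eq_one.mp hF1
    exact ⟨leaf i, trivial, rfl, by simp [cost, hmF i (mem_singleton_self i)]⟩
  have hF2 : 2 ≤ #F := by have := hF.card_pos; omega
  obtain ⟨F₁, hF₁F, hF₁⟩ := exists_subset_card_eq (show (#F + 1) / 2 ≤ #F by omega)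
  have hF₂ : #(F \ F₁) = #F - (#F + 1) / 2 := by rw [card_sdiff_of_subset hF₁F, hF₁]
  obtain ⟨S₁, hv₁, rfl, hc₁⟩ := ih F₁ (ssubset_of_subset_of_ne hF₁F (by rintro rfl; omega))
    (card_pos.mp (by omega)) fun i hi => hmF i (hF₁F hi)
  obtain ⟨S₂, hv₂, hm₂, hc₂⟩ := ih (F \ S₁.members) (sdiff_ssubset hF₁F (card_pos.mp (by omega)))
    (card_pos.mp (by omega)) fun i hi => hmF i (mem_sdiff.mp hi).1
  refine ⟨node S₁ S₂, ⟨hv₁, hv₂, hm₂ ▸ disjoint_sdiff⟩, by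
    rw [members, hm₂, union_sdiff_of_subset hF₁F], ?_⟩
  have hclog : Nat.clog 2 #F = Nat.clog 2 #S₁.members + 1 := by
    rw [Nat.clog_of_two_le one_lt_two hF2, hF₁, show #F + 2 - 1 = #F + 1 by omega]
  have hclog₂ : Nat.clog 2 #(F \ S₁.members) ≤ Nat.clog 2 #S₁.members :=
    Nat.clog_mono_right 2 (by omega)
  have hcard₂ : (#(F \ S₁.members) : ℝ) ≤ #S₁.members := by exact_mod_cast (by omega)
  have hcard : (#F : ℝ) = #S₁.members + #(F \ S₁.members) := by
    exact_mod_cast (card_sdiff_add_card_eq_card hF₁F).symm.trans (add_comm _ _)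
  have hc₂' : S₂.cost α β β m ≤ Nat.clog 2 #S₁.members * α + β * (#S₁.members * x) := by
    refine hc₂.trans (add_le_add (mul_le_mul_of_nonneg_right (by exact_mod_cast hclog₂) hα) ?_)
    exact mul_le_mul_of_nonneg_left (mul_le_mul_of_nonneg_right hcard₂ hx) hβ
  rw [cost, size_eq_card_mul hv₂ (fun i hi => hmF i (mem_sdiff.mp (hm₂ ▸ hi)).1), hm₂, hclog,
    hcard]
  push_cast
  nlinarith [max_le hc₁ hc₂']

end GTree

theorem stmt_6_general (p : ℕ) (hp : 2 ≤ p) (x y : ℕ)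
    (α β γ : ℝ) (hα : 0 < α) (hβ : 0 < β) (hγ : γ = β)
    (hcond : (Nat.clog 2 (p - 1) : ℝ) * α + β * (((p - 1) * x : ℕ) : ℝ) ≤ β * (y : ℝ))
    (r : Fin p) (m : Fin p → ℝ) (hm : ∀ i, m i = if i = r then (y : ℝ) else (x : ℝ)) :
    (∃ T : GTree p, T.valid ∧ T.members = Finset.univ ∧ T.root = r ∧
        T.cost α β γ m = α + β * (((p - 1) * x + y : ℕ) : ℝ)) ∧
    (∀ T : GTree p, T.valid → T.members = Finset.univ →
        α + β * (((p - 1) * x + y : ℕ) : ℝ) ≤ T.cost α β γ m) ∧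
    (3 ≤ p → α + β * (((p - 1) * x + y : ℕ) : ℝ) <
        (Nat.clog 2 p : ℝ) * α + β * (((p - 1) * x + y : ℕ) : ℝ)) := by
  subst γ
  have hsmall : ∀ i ∈ univ.erase r, m i = x := fun i hi => by rw [hm, if_neg (ne_of_mem_erase hi)]
  have hcard : #(univ.erase r) = p - 1 := by simp
  have htotal : ∑ i, m i = (((p - 1) * x + y : ℕ) : ℝ) := by
    rw [← add_sum_erase _ _ (mem_univ r), sum_congr rfl hsmall, sum_const, hcard, hm, if_pos rfl]
    push_cast
    ring
  refine ⟨?_, fun T hT hTu => ?_, fun hp3 => ?_⟩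
  · obtain ⟨S, hS, hSr, hcS⟩ := GTree.exists_cost_le_clog hα.le hβ.le (Nat.cast_nonneg x) _
      (card_pos.mp (by omega)) hsmall
    have hlocal : S.cost α β β m ≤ β * m r := by
      rw [hm, if_pos rfl]
      exact hcS.trans (by rw [hcard]; push_cast at hcond ⊢; linarith)
    refine ⟨.node (.leaf r) S, ⟨trivial, hS, by simp [GTree.members, hSr]⟩,
      by simp [GTree.members, hSr], rfl, ?_⟩
    rw [GTree.cost_node_leaf hlocal, GTree.size_eq_card_mul hS (hSr ▸ hsmall), hSr, hcard, hm,
      if_pos rfl]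
    push_cast
    ring
  · rw [← htotal, ← hTu]
    exact GTree.add_mul_sum_le_cost hα.le β m hT (by simp [hTu]; omega)
  · have : (2 : ℝ) ≤ Nat.clog 2 p := by
      exact_mod_cast (Nat.lt_clog_iff_pow_lt one_lt_two).mpr hp3
    nlinarith

/-- Lemma (large-small blocks): with one block of size `y` at processor `r` and `p - 1`
blocks of size `x < y`, `γ = β`, and `⌈log₂ (p-1)⌉ * α + β * (p-1) * x ≤ β * y`:
there is a gather tree of completion cost exactly `α + β * m` where `m = (p-1) * x + y`,
every gather tree has cost at least `α + β * m`, and (for `p ≥ 3`, so `⌈log₂ p⌉ ≥ 2`)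
`α + β * m < ⌈log₂ p⌉ * α + β * m`. -/
theorem stmt_6 (p : ℕ) (hp : 2 ≤ p) (x y : ℕ) (hx : 0 < x) (hxy : x < y)
    (α β γ : ℝ) (hα : 0 < α) (hβ : 0 < β) (hγ : γ = β)
    (hcond : (Nat.clog 2 (p - 1) : ℝ) * α + β * (((p - 1) * x : ℕ) : ℝ) ≤ β * (y : ℝ))
    (r : Fin p) (m : Fin p → ℝ) (hm : ∀ i, m i = if i = r then (y : ℝ) else (x : ℝ)) :
    (∃ T : GTree p, T.valid ∧ T.members = Finset.univ ∧ T.root = r ∧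
        T.cost α β γ m = α + β * (((p - 1) * x + y : ℕ) : ℝ)) ∧
    (∀ T : GTree p, T.valid → T.members = Finset.univ →
        α + β * (((p - 1) * x + y : ℕ) : ℝ) ≤ T.cost α β γ m) ∧
    (3 ≤ p → α + β * (((p - 1) * x + y : ℕ) : ℝ) <
        (Nat.clog 2 p : ℝ) * α + β * (((p - 1) * x + y : ℕ) : ℝ)) :=
  stmt_6_general p hp x y α β γ hα hβ hγ hcond r m hm
end

section
/- The following decision problem is NP-complete: given positive integers p, block sizes m'_0,…,m'_{p+1}, rational parameters α, β = γ = 1, and a bound B, decide whether there exists a non-ordered one-ported gather tree over the p+2 processors (root chosen freely) with completion cost at most B, where the cost is defined by the recursive equations: cost of a singleton is 0; cost(T) = max(cost(T₁), cost(T₂)) + α + β·Size(T₂) when the last subtree T₂ is communicated, and the root's own block contributes max(γ·m_r, cost(T')) + α + β·Size(T') when the local copy overlaps subtree T'. -/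
/-!
A gather tree costs at least its total size plus `α` per child of the root. Here the total size
is `2M + 2` and `B = 2M + 2 + 2α`, so a tree within the bound has at most two children at the
root, and a single child would have to send a message of size at least `3M/2 + 1`, far too slow.
With children `s₁` then `s₂`, the bound is met exactly when `cost s₁ ≤ m'_r` and
`cost s₂ ≤ m'_r + α + size s₁`. Summing these forces `r = p + 1`; processor `p` cannot lie in
`s₁`, as then `s₂` would hold all ordinary blocks and be too slow; and the two inequalities pin
the size `a + kα` of `s₁` (with `a` the sum of its `k` ordinary `m_i`) so tightly that `a = M/2`.
Conversely, from a solution take the half `Q` with `2|Q| ≤ p`, send it to `p + 1` as a chain, and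
then send the other half gathered at processor `p`.
-/

open Finset

namespace GTree

variable {n : ℕ} {α : ℝ} {m : Fin n → ℝ}

theorem members_nonempty (t : GTree n) : t.members.Nonempty := by
  induction t with
  | leaf i => exact ⟨i, Finset.mem_singleton_self i⟩
  | node t s iht _ => exact iht.mono Finset.subset_union_left

theorem size_eq_sum_members_s7 {t : GTree n} (ht : t.valid) : t.size m = ∑ j ∈ t.members, m j := by
  induction t with
  | leaf i => simp [size, members]
  | node t s iht ihs =>
    obtain ⟨htv, hsv, hdisj⟩ := ht
    rw [size, members, Finset.sum_union hdisj, iht htv, ihs hsv]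

theorem size_add_rootDeg_mul_le_cost (t : GTree n) :
    t.size m + t.rootDeg * α ≤ t.cost α 1 1 m := by
  induction t with
  | leaf i => simp [size, cost, rootDeg]
  | node t s iht _ =>
    simp only [size, cost, rootDeg, Nat.cast_succ, one_mul]
    linarith [le_max_left (t.cost α 1 1 m) (s.cost α 1 1 m)]

theorem size_le_cost (hα : 0 ≤ α) (t : GTree n) : t.size m ≤ t.cost α 1 1 m := by
  have := t.size_add_rootDeg_mul_le_cost (m := m) (α := α)
  nlinarith [(t.rootDeg.cast_nonneg : (0 : ℝ) ≤ t.rootDeg)]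

theorem two_mul_size_add_le_cost_node_leaf (hα : 0 ≤ α) (j : Fin n) (s : GTree n) :
    2 * s.size m + α ≤ (node (leaf j) s).cost α 1 1 m := by
  simp only [cost, one_mul]
  linarith [le_max_right (m j) (s.cost α 1 1 m), s.size_le_cost (m := m) hα]

theorem size_add_two_mul_le_cost_node_node (hα : 0 ≤ α) (t s₁ s₂ : GTree n) :
    (node (node t s₁) s₂).size m + 2 * α ≤ (node (node t s₁) s₂).cost α 1 1 m := by
  have := (node (node t s₁) s₂).size_add_rootDeg_mul_le_cost (m := m) (α := α)
  simp only [rootDeg, Nat.cast_add, Nat.cast_one] at this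
  nlinarith [(t.rootDeg.cast_nonneg : (0 : ℝ) ≤ t.rootDeg)]

/-- Meeting the lower bound `size + 2α` means that neither message keeps the root waiting. -/
theorem cost_node_node_leaf_le_iff (r : Fin n) (s₁ s₂ : GTree n) :
    (node (node (leaf r) s₁) s₂).cost α 1 1 m ≤
        (node (node (leaf r) s₁) s₂).size m + 2 * α ↔
      s₁.cost α 1 1 m ≤ m r ∧ s₂.cost α 1 1 m ≤ m r + α + s₁.size m := by
  simp only [cost, size, one_mul]
  constructor
  · intro h
    set first := max (m r) (s₁.cost α 1 1 m) + α + s₁.size m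
    have h₁ := le_max_left first (s₂.cost α 1 1 m)
    have h₂ := le_max_right first (s₂.cost α 1 1 m)
    exact ⟨by linarith [le_max_right (m r) (s₁.cost α 1 1 m)], by linarith⟩
  · rintro ⟨h₁, h₂⟩
    rw [max_eq_left h₁, max_eq_left h₂]
    linarith

theorem exists_eq_node_node_leaf_of_cost_le (hα : 0 < α) (hm : ∀ j, 0 ≤ m j) {K : ℝ}
    {t : GTree n} (hK : ∀ j ∈ t.members, m j ≤ K) (hsize : 2 * K + α < t.size m)
    (hcost : t.cost α 1 1 m ≤ t.size m + 2 * α) :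
    ∃ r s₁ s₂, t = node (node (leaf r) s₁) s₂ := by
  match t with
  | leaf j =>
    have := hK j (Finset.mem_singleton_self j)
    simp only [size] at hsize
    linarith [hm j]
  | node (leaf j) s =>
    have := two_mul_size_add_le_cost_node_leaf (m := m) hα.le j s
    have := hK j (Finset.mem_union_left _ (Finset.mem_singleton_self j))
    simp only [size] at hsize hcost
    linarith
  | node (node (leaf r) s₁) s₂ => exact ⟨r, s₁, s₂, rfl⟩
  | node (node (node u v) s₁) s₂ =>
    have := (node (node (node u v) s₁) s₂).size_add_rootDeg_mul_le_cost (m := m) (α := α)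
    simp only [rootDeg, Nat.cast_add, Nat.cast_one] at this
    nlinarith [(u.rootDeg.cast_nonneg : (0 : ℝ) ≤ u.rootDeg)]

theorem exists_chain (hα : 0 ≤ α) (hm : ∀ j, 0 ≤ m j) {t : GTree n} (ht : t.valid)
    (A : Finset (Fin n)) (hdisj : Disjoint t.members A)
    (hle : ∀ x ∈ A, m x ≤ t.cost α 1 1 m) :
    ∃ t' : GTree n, t'.valid ∧ t'.members = t.members ∪ A ∧
      t'.cost α 1 1 m = t.cost α 1 1 m + ∑ x ∈ A, m x + #A * α := by
  induction A using Finset.induction_on with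
  | empty => exact ⟨t, ht, by simp, by simp⟩
  | insert x A hx ih =>
    rw [Finset.disjoint_insert_right] at hdisj
    obtain ⟨t', hv, hmem, hcost⟩ :=
      ih hdisj.2 fun y hy => hle y (Finset.mem_insert_of_mem hy)
    have hxt' : x ∉ t'.members := by simp [hmem, hdisj.1, hx]
    have hle' : (leaf x).cost α 1 1 m ≤ t'.cost α 1 1 m := by
      rw [cost, one_mul]
      have := Finset.sum_nonneg fun y (_ : y ∈ A) => hm y
      nlinarith [hle x (Finset.mem_insert_self x A), (#A).cast_nonneg (α := ℝ)]
    refine ⟨node t' (leaf x), ⟨hv, trivial, Finset.disjoint_singleton_right.mpr hxt'⟩,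
      ?_, ?_⟩
    · simp [members, hmem, Finset.union_insert]
    · rw [cost, max_eq_left hle', hcost, Finset.sum_insert hx, Finset.card_insert_of_notMem hx]
      simp only [size, one_mul, Nat.cast_succ]
      ring

theorem exists_chain_of_nonempty (hα : 0 ≤ α) (hm : ∀ j, 0 ≤ m j) {A : Finset (Fin n)}
    (hA : A.Nonempty) :
    ∃ t : GTree n, t.valid ∧ t.members = A ∧
      t.cost α 1 1 m = ∑ x ∈ A, m x + (#A - 1) * α := by
  obtain ⟨y, hy, hmax⟩ := A.exists_max_image m hA
  obtain ⟨t, hv, hmem, hcost⟩ := exists_chain hα hm (t := leaf y) trivial (A.erase y)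
    (by simp [members]) fun x hx => by simpa [cost] using hmax x (Finset.mem_of_mem_erase hx)
  refine ⟨t, hv, by simp [hmem, members, Finset.insert_erase hy], ?_⟩
  rw [hcost, ← Finset.add_sum_erase A m hy, ← Finset.card_erase_add_one hy]
  simp only [cost, one_mul, Nat.cast_succ]
  ring

theorem exists_cost_le_add_sum (hα : 0 ≤ α) (hm : ∀ j, 0 ≤ m j) {r : Fin n}
    {A : Finset (Fin n)} (hr : r ∉ A) (hA : ∑ x ∈ A, m x + (#A - 1) * α ≤ m r) :
    ∃ t : GTree n, t.valid ∧ t.members = insert r A ∧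
      m r ≤ t.cost α 1 1 m ∧ t.cost α 1 1 m ≤ m r + α + ∑ x ∈ A, m x := by
  rcases A.eq_empty_or_nonempty with rfl | hne
  · exact ⟨leaf r, trivial, rfl, by simp [cost], by simp [cost, hα]⟩
  obtain ⟨c, hv, hmem, hcost⟩ := exists_chain_of_nonempty hα hm hne
  have hsize : c.size m = ∑ x ∈ A, m x := by rw [size_eq_sum_members_s7 hv, hmem]
  refine ⟨node (leaf r) c, ⟨trivial, hv, by simpa [members, hmem] using hr⟩,
    by rw [members, hmem, Finset.insert_eq]; rfl, ?_⟩
  simp only [cost, one_mul, hsize, max_eq_left (hcost ▸ hA)]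
  constructor <;> linarith [Finset.sum_nonneg fun y (_ : y ∈ A) => hm y]

end GTree

section Reduction

/-- Processor `p` of the paper, holding the block `M/2`. -/
def bigProc (p : ℕ) : Fin (p + 2) := (Fin.last p).castSucc

/-- Processor `p + 1` of the paper, holding the block `M/2 + 1`. -/
def rootProc (p : ℕ) : Fin (p + 2) := Fin.last (p + 1)

variable {p : ℕ}

local notation "ι" => Fin.castAddEmb 2

theorem eq_castAdd_or_eq_bigProc_or_eq_rootProc (j : Fin (p + 2)) :
    (∃ i, j = Fin.castAdd 2 i) ∨ j = bigProc p ∨ j = rootProc p := by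
  rcases Fin.eq_castSucc_or_eq_last j with ⟨j, rfl⟩ | rfl
  · rcases Fin.eq_castSucc_or_eq_last j with ⟨i, rfl⟩ | rfl
    · exact Or.inl ⟨i, rfl⟩
    · exact Or.inr (Or.inl rfl)
  · exact Or.inr (Or.inr rfl)

@[simp]
theorem castAdd_ne_bigProc (i : Fin p) : Fin.castAdd 2 i ≠ bigProc p :=
  Fin.ne_of_val_ne i.isLt.ne

@[simp]
theorem castAdd_ne_rootProc (i : Fin p) : Fin.castAdd 2 i ≠ rootProc p :=
  Fin.ne_of_val_ne (Nat.lt_succ_of_lt i.isLt).ne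

@[simp]
theorem bigProc_ne_rootProc : bigProc p ≠ rootProc p :=
  Fin.ne_of_val_ne (Nat.lt_succ_self p).ne

theorem bigProc_notMem_map (S : Finset (Fin p)) : bigProc p ∉ S.map ι := by
  simp

/-- The gather instance built from the PARTITION instance `m`; `h` stands for the half-sum
`M / 2` of the paper. -/
structure IsPartitionReduction (m : Fin p → ℕ) (h : ℕ) (α : ℝ) (w : Fin (p + 2) → ℝ) :
    Prop where
  sum_eq : ∑ i, m i = 2 * h
  pos : ∀ i, 0 < m i
  lt_half : ∀ i, m i < h
  natCast_mul_alpha : (p : ℝ) * α = 1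
  weight_castAdd : ∀ i, w (Fin.castAdd 2 i) = m i + α
  weight_bigProc : w (bigProc p) = h
  weight_rootProc : w (rootProc p) = h + 1

namespace IsPartitionReduction

variable {m : Fin p → ℕ} {h : ℕ} {α : ℝ} {w : Fin (p + 2) → ℝ}

theorem two_lt (hI : IsPartitionReduction m h α w) : 2 < p := by
  have hp : p ≠ 0 := by
    rintro rfl
    simpa using hI.natCast_mul_alpha
  have : ∑ i, m i < ∑ _i : Fin p, h :=
    Finset.sum_lt_sum_of_nonempty ⟨⟨0, by omega⟩, Finset.mem_univ _⟩ fun i _ => hI.lt_half i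
  rw [hI.sum_eq, Finset.sum_const, Finset.card_univ, Fintype.card_fin, smul_eq_mul] at this
  exact Nat.lt_of_mul_lt_mul_right this

theorem alpha_pos (hI : IsPartitionReduction m h α w) : 0 < α :=
  pos_of_mul_pos_right (hI.natCast_mul_alpha ▸ one_pos) (Nat.cast_nonneg p)

theorem alpha_lt_one (hI : IsPartitionReduction m h α w) : α < 1 := by
  have : (2 : ℝ) < p := by exact_mod_cast hI.two_lt
  nlinarith [hI.natCast_mul_alpha, hI.alpha_pos]

theorem one_le_half (hI : IsPartitionReduction m h α w) : 1 ≤ h :=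
  Nat.one_le_of_lt (hI.lt_half ⟨0, by linarith [hI.two_lt]⟩)

theorem weight_castAdd_le (hI : IsPartitionReduction m h α w) (i : Fin p) :
    w (Fin.castAdd 2 i) ≤ h - 1 + α := by
  have : (m i : ℝ) + 1 ≤ h := by exact_mod_cast hI.lt_half i
  rw [hI.weight_castAdd]
  linarith

theorem one_lt_weight_castAdd (hI : IsPartitionReduction m h α w) (i : Fin p) :
    1 < w (Fin.castAdd 2 i) := by
  have : (1 : ℝ) ≤ m i := by exact_mod_cast hI.pos i
  rw [hI.weight_castAdd]
  linarith [hI.alpha_pos]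

theorem weight_nonneg (hI : IsPartitionReduction m h α w) (j : Fin (p + 2)) : 0 ≤ w j := by
  rcases eq_castAdd_or_eq_bigProc_or_eq_rootProc j with ⟨i, rfl⟩ | rfl | rfl
  · linarith [hI.one_lt_weight_castAdd i]
  · simp [hI.weight_bigProc]
  · rw [hI.weight_rootProc]
    positivity

theorem weight_le_half (hI : IsPartitionReduction m h α w) {j : Fin (p + 2)}
    (hj : j ≠ rootProc p) : w j ≤ h := by
  rcases eq_castAdd_or_eq_bigProc_or_eq_rootProc j with ⟨i, rfl⟩ | rfl | rfl
  · linarith [hI.weight_castAdd_le i, hI.alpha_lt_one]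
  · exact hI.weight_bigProc.le
  · exact absurd rfl hj

theorem weight_le (hI : IsPartitionReduction m h α w) (j : Fin (p + 2)) : w j ≤ h + 1 := by
  by_cases hj : j = rootProc p
  · rw [hj, hI.weight_rootProc]
  · linarith [hI.weight_le_half hj]

theorem sum_weight (hI : IsPartitionReduction m h α w) : ∑ j, w j = 4 * h + 2 := by
  have hsum : ∑ i, (m i : ℝ) = 2 * h := by exact_mod_cast hI.sum_eq
  rw [Fin.sum_univ_castSucc, Fin.sum_univ_castSucc]
  change ∑ i, w (Fin.castAdd 2 i) + w (bigProc p) + w (rootProc p) = _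
  simp only [hI.weight_castAdd, Finset.sum_add_distrib, hsum, Finset.sum_const,
    Finset.card_univ, Fintype.card_fin, nsmul_eq_mul, hI.natCast_mul_alpha, hI.weight_bigProc,
    hI.weight_rootProc]
  ring

theorem sum_weight_map (hI : IsPartitionReduction m h α w) (S : Finset (Fin p)) :
    ∑ x ∈ S.map ι, w x = ((∑ i ∈ S, m i : ℕ) : ℝ) + #S * α := by
  simp [Finset.sum_map, hI.weight_castAdd, Finset.sum_add_distrib]

theorem sum_compl_eq (hI : IsPartitionReduction m h α w) {R : Finset (Fin p)}
    (hR : ∑ i ∈ R, m i = h) : ∑ i ∈ Rᶜ, m i = h := by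
  have := R.sum_add_sum_compl m
  rw [hI.sum_eq] at this
  omega

theorem exists_sum_eq_half_two_mul_card_le (hI : IsPartitionReduction m h α w)
    {R : Finset (Fin p)} (hR : ∑ i ∈ R, m i = h) :
    ∃ Q : Finset (Fin p), ∑ i ∈ Q, m i = h ∧ 2 * #Q ≤ p := by
  by_cases hRp : 2 * #R ≤ p
  · exact ⟨R, hR, hRp⟩
  · refine ⟨Rᶜ, hI.sum_compl_eq hR, ?_⟩
    have := R.card_add_card_compl
    rw [Fintype.card_fin] at this
    omega

theorem one_lt_card (hI : IsPartitionReduction m h α w) {S : Finset (Fin p)}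
    (hS : ∑ i ∈ S, m i = h) : 1 < #S := by
  by_contra hS1
  have : Nonempty (Fin p) := ⟨⟨0, by linarith [hI.two_lt]⟩⟩
  obtain ⟨i, hi⟩ := Finset.card_le_one_iff_subset_singleton.mp (not_lt.mp hS1)
  have := Finset.sum_le_sum_of_subset (f := m) hi
  rw [Finset.sum_singleton] at this
  linarith [hI.lt_half i]

/-- Processor `p` first receives all but two blocks `g, g'` of `S` as one chain; holding back
`m g + m g' ≥ 2` makes that chain finish before the local copy of the block `h`, so it costs only
one `α`. Then `g` and `g'` follow one at a time. -/
theorem exists_tree_bigProc (hI : IsPartitionReduction m h α w) {S : Finset (Fin p)}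
    (hS : ∑ i ∈ S, m i = h) :
    ∃ t : GTree (p + 2), t.valid ∧ t.members = insert (bigProc p) (S.map ι) ∧
      t.cost α 1 1 w ≤ 2 * h + (#S + 3) * α := by
  have hα := hI.alpha_pos
  obtain ⟨g, hg, g', hg', hgg'⟩ := Finset.one_lt_card.mp (hI.one_lt_card hS)
  set D : Finset (Fin p) := {g, g'}
  have hD : D ⊆ S := Finset.insert_subset hg (Finset.singleton_subset_iff.mpr hg')
  have hsumD : ∑ i ∈ D, m i = m g + m g' := Finset.sum_pair hgg'
  have hsum : ∑ i ∈ S \ D, m i + (m g + m g') = h := by rw [← hsumD, Finset.sum_sdiff hD, hS]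
  have hcard : #(S \ D) + 2 = #S := by
    rw [← Finset.card_pair hgg', Finset.card_sdiff_add_card_eq_card hD]
  have hcardp : (#(S \ D) : ℝ) ≤ p := by
    exact_mod_cast card_le_univ (S \ D) |>.trans_eq (by simp)
  have hmg : (1 : ℝ) ≤ m g := by exact_mod_cast hI.pos g
  have hmg' : (1 : ℝ) ≤ m g' := by exact_mod_cast hI.pos g'
  have hsumR : ((∑ i ∈ S \ D, m i : ℕ) : ℝ) + m g + m g' = h := by
    rw [← hsum]; push_cast; ring
  obtain ⟨b, hbv, hbmem, hb_lo, hb_up⟩ := GTree.exists_cost_le_add_sum hα.le hI.weight_nonneg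
    (bigProc_notMem_map (S \ D)) (by
      rw [hI.sum_weight_map, Finset.card_map, hI.weight_bigProc]
      nlinarith [hI.natCast_mul_alpha])
  obtain ⟨t, htv, htmem, htcost⟩ := GTree.exists_chain hα.le hI.weight_nonneg hbv (D.map ι)
    (by simp [hbmem, Finset.disjoint_map, Finset.sdiff_disjoint]) fun x hx => by
      obtain ⟨i, -, rfl⟩ := Finset.mem_map.mp hx
      rw [Fin.castAddEmb_apply]
      linarith [hI.weight_castAdd_le i, hI.alpha_lt_one, hI.weight_bigProc]
  refine ⟨t, htv, ?_, ?_⟩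
  · rw [htmem, hbmem, Finset.insert_union, ← Finset.map_union, Finset.sdiff_union_of_subset hD]
  · rw [htcost, hI.sum_weight_map, Finset.card_map, hsumD, Finset.card_pair hgg']
    rw [hI.weight_bigProc, hI.sum_weight_map] at hb_up
    have : (#(S \ D) : ℝ) + 2 = #S := by exact_mod_cast hcard
    rw [← this]
    push_cast
    linarith

/-- Processor `p + 1` receives a chain over the smaller half `Q` of the solution, then the tree
of `exists_tree_bigProc` over `Qᶜ`. -/
theorem exists_tree_of_sum_eq (hI : IsPartitionReduction m h α w) {R : Finset (Fin p)}
    (hR : ∑ i ∈ R, m i = h) :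
    ∃ T : GTree (p + 2), T.valid ∧ T.members = Finset.univ ∧
      T.cost α 1 1 w ≤ 4 * h + 2 + 2 * α := by
  obtain ⟨Q, hQ, hQp⟩ := hI.exists_sum_eq_half_two_mul_card_le hR
  have hQ₁ : (1 : ℝ) ≤ #Q := by exact_mod_cast (hI.one_lt_card hQ).le
  have hQp' : 2 * (#Q : ℝ) ≤ p := by exact_mod_cast hQp
  have hQc : (#Q : ℝ) + #Qᶜ = p := by exact_mod_cast Q.card_add_card_compl.trans (by simp)
  have hsumQ : ∑ x ∈ Q.map ι, w x = h + #Q * α := by rw [hI.sum_weight_map, hQ]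
  obtain ⟨s₁, hv₁, hmem₁, hc₁⟩ := GTree.exists_chain_of_nonempty (A := Q.map ι)
    hI.alpha_pos.le hI.weight_nonneg
    (Finset.map_nonempty.mpr (Finset.card_pos.mp (by linarith [hI.one_lt_card hQ])))
  obtain ⟨s₂, hv₂, hmem₂, hc₂⟩ := hI.exists_tree_bigProc (hI.sum_compl_eq hQ)
  set T := GTree.node (GTree.node (GTree.leaf (rootProc p)) s₁) s₂
  have hvT : T.valid := ⟨⟨trivial, hv₁, by simp [GTree.members, hmem₁]⟩, hv₂, by
    simp [GTree.members, hmem₁, hmem₂, Finset.disjoint_map, disjoint_compl_right]⟩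
  have hmemT : T.members = Finset.univ := by
    refine Finset.eq_univ_of_forall fun j => ?_
    rcases eq_castAdd_or_eq_bigProc_or_eq_rootProc j with ⟨i, rfl⟩ | rfl | rfl <;>
      simp [T, GTree.members, hmem₁, hmem₂, em]
  have hsize : T.size w = 4 * h + 2 := by
    rw [GTree.size_eq_sum_members_s7 hvT, hmemT, hI.sum_weight]
  have hc₁' : s₁.cost α 1 1 w ≤ w (rootProc p) := by
    rw [hc₁, hsumQ, Finset.card_map, hI.weight_rootProc]
    nlinarith [hI.natCast_mul_alpha, hI.alpha_pos]
  have hc₂' : s₂.cost α 1 1 w ≤ w (rootProc p) + α + s₁.size w := by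
    rw [GTree.size_eq_sum_members_s7 hv₁, hmem₁, hsumQ, hI.weight_rootProc]
    nlinarith [hI.natCast_mul_alpha, hI.alpha_pos]
  refine ⟨T, hvT, hmemT, ?_⟩
  linarith [(GTree.cost_node_node_leaf_le_iff (rootProc p) s₁ s₂).mpr ⟨hc₁', hc₂'⟩]

theorem exists_eq_map_of_notMem {F : Finset (Fin (p + 2))} (hP : bigProc p ∉ F)
    (hR : rootProc p ∉ F) : ∃ O : Finset (Fin p), F = O.map ι := by
  refine ⟨Finset.univ.filter fun i => Fin.castAdd 2 i ∈ F, Finset.ext fun j => ?_⟩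
  rcases eq_castAdd_or_eq_bigProc_or_eq_rootProc j with ⟨i, rfl⟩ | rfl | rfl <;> simp [*]

theorem sum_weight_eq_half (hI : IsPartitionReduction m h α w) {F : Finset (Fin (p + 2))}
    (hP : bigProc p ∈ F) (hR : rootProc p ∉ F) (hF : ∑ x ∈ F, w x ≤ h + 1) :
    ∑ x ∈ F, w x = h := by
  rw [← Finset.add_sum_erase F w hP, hI.weight_bigProc] at hF ⊢
  rcases (F.erase (bigProc p)).eq_empty_or_nonempty with hE | ⟨x, hx⟩
  · simp [hE]
  obtain ⟨hxP, hxF⟩ := Finset.mem_erase.mp hx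
  obtain ⟨i, rfl⟩ : ∃ i, x = Fin.castAdd 2 i := by
    rcases eq_castAdd_or_eq_bigProc_or_eq_rootProc x with hx | rfl | rfl
    exacts [hx, absurd rfl hxP, absurd hxF hR]
  have := Finset.single_le_sum (fun j _ => hI.weight_nonneg j) hx
  linarith [hI.one_lt_weight_castAdd i]

theorem size_add_alpha_lt_cost (hI : IsPartitionReduction m h α w) {t : GTree (p + 2)}
    (hP : bigProc p ∉ t.members) (hR : rootProc p ∉ t.members)
    (hsize : 2 * h + 1 ≤ t.size w) :
    t.size w + α < t.cost α 1 1 w := by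
  by_contra hcost
  have hK : ∀ j ∈ t.members, w j ≤ h - 1 + α := fun j hj => by
    rcases eq_castAdd_or_eq_bigProc_or_eq_rootProc j with ⟨i, rfl⟩ | rfl | rfl
    exacts [hI.weight_castAdd_le i, absurd hj hP, absurd hj hR]
  obtain ⟨r, s₁, s₂, rfl⟩ := GTree.exists_eq_node_node_leaf_of_cost_le hI.alpha_pos
    hI.weight_nonneg hK (by linarith [hI.alpha_lt_one]) (by linarith [hI.alpha_pos])
  linarith [GTree.size_add_two_mul_le_cost_node_node (m := w) hI.alpha_pos.le (.leaf r) s₁ s₂,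
    hI.alpha_pos]

/-- The `α`-parts of the blocks in `F` add up to less than `1`, so the two bounds pin their
integer part to `h`. -/
theorem exists_sum_eq_half (hI : IsPartitionReduction m h α w) {F : Finset (Fin (p + 2))}
    (hF : F.Nonempty) (hP : bigProc p ∉ F) (hR : rootProc p ∉ F)
    (hup : ∑ x ∈ F, w x ≤ h + 1) (hlo : 2 * h - α ≤ 2 * ∑ x ∈ F, w x) :
    ∃ R : Finset (Fin p), ∑ i ∈ R, m i = h := by
  obtain ⟨O, rfl⟩ := exists_eq_map_of_notMem hP hR
  rw [hI.sum_weight_map] at hup hlo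
  have hk : (1 : ℝ) ≤ #O := by exact_mod_cast Finset.card_pos.mpr (Finset.map_nonempty.mp hF)
  have hα := hI.alpha_pos
  set a := ∑ i ∈ O, m i
  have hle : a ≤ h := by
    have : (a : ℝ) < h + 1 := by nlinarith
    exact Nat.lt_succ_iff.mp (by exact_mod_cast this)
  have hne : O ≠ Finset.univ := by
    rintro rfl
    change ∑ i, m i ≤ h at hle
    linarith [hI.sum_eq, hI.one_le_half]
  have hkp : (#O : ℝ) + 1 ≤ p := by
    have := (Finset.card_lt_iff_ne_univ O).mpr hne
    rw [Fintype.card_fin] at this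
    exact_mod_cast this
  have : (h : ℝ) < a + 1 := by nlinarith [hI.natCast_mul_alpha]
  have : h < a + 1 := by exact_mod_cast this
  exact ⟨O, by omega⟩

theorem exists_partition_of_cost_le (hI : IsPartitionReduction m h α w) {T : GTree (p + 2)}
    (hv : T.valid) (hmem : T.members = Finset.univ)
    (hcost : T.cost α 1 1 w ≤ 4 * h + 2 + 2 * α) :
    ∃ R : Finset (Fin p), ∑ i ∈ R, m i = h := by
  have hsize : T.size w = 4 * h + 2 := by
    rw [GTree.size_eq_sum_members_s7 hv, hmem, hI.sum_weight]
  have hh : (1 : ℝ) ≤ h := by exact_mod_cast hI.one_le_half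
  obtain ⟨r, s₁, s₂, rfl⟩ := GTree.exists_eq_node_node_leaf_of_cost_le hI.alpha_pos
    hI.weight_nonneg (fun j _ => hI.weight_le j) (by linarith [hI.alpha_lt_one]) (by linarith)
  obtain ⟨hc₁, hc₂⟩ :=
    (GTree.cost_node_node_leaf_le_iff (α := α) (m := w) r s₁ s₂).mp (by linarith)
  have hz₁ := s₁.size_le_cost (m := w) hI.alpha_pos.le
  have hz₂ := s₂.size_le_cost (m := w) hI.alpha_pos.le
  simp only [GTree.size] at hsize
  obtain rfl : r = rootProc p := by
    by_contra hr
    linarith [hI.weight_le_half hr, hI.alpha_lt_one]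
  rw [hI.weight_rootProc] at hc₁ hc₂ hsize
  obtain ⟨⟨-, hv₁, hd₁⟩, hv₂, hd₂⟩ := hv
  have hmem' := Finset.ext_iff.mp hmem
  simp only [GTree.members, Finset.mem_union, Finset.mem_singleton, Finset.mem_univ,
    iff_true] at hmem' hd₁ hd₂
  have hR₁ : rootProc p ∉ s₁.members := Finset.disjoint_singleton_left.mp hd₁
  have hR₂ : rootProc p ∉ s₂.members := fun h₂ =>
    Finset.disjoint_left.mp hd₂ (Finset.mem_union_left _ (Finset.mem_singleton_self _)) h₂
  rw [GTree.size_eq_sum_members_s7 hv₁] at hz₁ hsize hc₂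
  rcases hmem' (bigProc p) with (hPR | hP₁) | hP₂
  · exact absurd hPR bigProc_ne_rootProc
  · have hz₁' := hI.sum_weight_eq_half hP₁ hR₁ (by linarith)
    have hP₂ : bigProc p ∉ s₂.members :=
      Finset.disjoint_left.mp hd₂ (Finset.mem_union_right _ hP₁)
    linarith [hI.size_add_alpha_lt_cost hP₂ hR₂ (by linarith)]
  · exact hI.exists_sum_eq_half s₁.members_nonempty
      (fun hP₁ => Finset.disjoint_left.mp hd₂ (Finset.mem_union_right _ hP₁) hP₂) hR₁
      (by linarith) (by linarith)

end IsPartitionReduction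

end Reduction

/-- NP-completeness of deciding whether a non-ordered one-ported gather tree of completion
cost at most `B` exists (Theorem 5), formalized through the explicit Karp reduction from
the NP-complete PARTITION problem (membership in NP is witnessed by the tree certificate
in the ∃-statement on the right-hand side): for a PARTITION instance `m` of positive
integers with even sum `M`, no element `≥ M/2`, taking `α = 1/p`, `β = γ = 1`,
`m'_i = m_i + α` for `i < p`, `m'_p = M/2`, `m'_{p+1} = M/2 + 1`, and `B = 2M + 2 + 2α`,
the PARTITION instance has a solution if and only if some valid spanning gather tree over
the `p + 2` processors (root chosen freely) has completion cost at most `B`. -/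
theorem stmt_7 (p : ℕ) (hp : 1 ≤ p) (m : Fin p → ℕ) (hpos : ∀ i, 0 < m i)
    (M : ℕ) (hM : M = ∑ i, m i) (heven : 2 ∣ M) (hsmall : ∀ i, m i < M / 2)
    (α : ℝ) (hα : α = 1 / (p : ℝ))
    (m' : Fin (p + 2) → ℝ)
    (hm' : ∀ i : Fin p, m' (Fin.castAdd 2 i) = (m i : ℝ) + α)
    (hmp : m' ⟨p, by omega⟩ = (M : ℝ) / 2)
    (hmp1 : m' ⟨p + 1, by omega⟩ = (M : ℝ) / 2 + 1)
    (B : ℝ) (hB : B = 2 * (M : ℝ) + 2 + 2 * α) :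
    (∃ R : Finset (Fin p), ∑ i ∈ R, m i = M / 2) ↔
    (∃ T : GTree (p + 2), T.valid ∧ T.members = Finset.univ ∧
        T.cost α 1 1 m' ≤ B) := by
  obtain ⟨h, rfl⟩ := heven
  have hh : 2 * h / 2 = h := by omega
  have hhR : ((2 * h : ℕ) : ℝ) / 2 = h := by push_cast; ring
  rw [hhR] at hmp hmp1
  rw [hh] at hsmall ⊢
  have hI : IsPartitionReduction m h α m' :=
    { sum_eq := hM.symm
      pos := hpos
      lt_half := hsmall
      natCast_mul_alpha := by rw [hα]; field_simp
      weight_castAdd := hm'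
      weight_bigProc := hmp
      weight_rootProc := hmp1 }
  rw [hB, show 2 * ((2 * h : ℕ) : ℝ) + 2 + 2 * α = 4 * h + 2 + 2 * α by push_cast; ring]
  exact ⟨fun ⟨R, hR⟩ => hI.exists_tree_of_sum_eq hR,
    fun ⟨T, hv, hmem, hcost⟩ => hI.exists_partition_of_cost_le hv hmem hcost⟩
end

section
/- Let m_0,…,m_{p−1} be positive integers with even sum m, no m_i ≥ m/2, and suppose R ⊆ {0,…,p−1} satisfies ∑_{i∈R} m_i = m/2 with |R| ≤ p/2. Set α = 1/p, m'_i = m_i + α, m'_p = m/2, m'_{p+1} = m/2 + 1, and β = γ = 1. Then ⌈log₂ |R|⌉·α + |R|·α + ∑_{i∈R} m_i < m/2 + 1, and consequently a gather tree rooted at processor p+1 exists with completion cost exactly 2m + 2 + 2α. -/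
open Finset

/-!
Processor `p + 1` first receives, from a balanced gather tree over `R`, the blocks of `R`; that tree
finishes by `⌈log₂ |R|⌉α + |R|α + M/2 < M/2 + 1`, i.e. while `p + 1` is still copying its own
block. Meanwhile processor `p` receives one block `j ∉ R`, and then a balanced tree over the
rest of the complement; both arrive before `p` is ready, because `m j < M/2` and `m j ≥ 1`.
Finally `p` sends its segment of size `M + |Rᶜ|α`, and the total is `2M + 2 + 2α` because
`|R|α + |Rᶜ|α = pα = 1`.
-/

namespace GTree

variable {n : ℕ}

theorem size_eq_sum (w : Fin n → ℝ) : ∀ {t : GTree n}, t.valid → t.size w = ∑ i ∈ t.members, w i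
  | leaf i, _ => by simp [size, members]
  | node t s, ⟨ht, hs, hd⟩ => by
      rw [size, members, sum_union hd, size_eq_sum w ht, size_eq_sum w hs]

section Cost

variable {α β γ : ℝ} {w : Fin n → ℝ} {t s : GTree n}

theorem cost_node_of_le (h : s.cost α β γ w ≤ t.cost α β γ w) :
    (node t s).cost α β γ w = t.cost α β γ w + α + β * s.size w := by
  rw [cost, max_eq_left h]

theorem exists_join_cost_le (hβ : 0 ≤ β) {c : ℝ} (ht : t.valid) (hs : s.valid)
    (hd : Disjoint t.members s.members) (htc : t.cost α β β w ≤ c * α + β * t.size w)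
    (hsc : s.cost α β β w ≤ c * α + β * s.size w) :
    ∃ T : GTree n, T.valid ∧ T.members = t.members ∪ s.members ∧
      T.cost α β β w ≤ (c + 1) * α + β * (t.size w + s.size w) := by
  rcases le_total (s.size w) (t.size w) with h | h
  · refine ⟨node t s, ⟨ht, hs, hd⟩, rfl, ?_⟩
    have : max (t.cost α β β w) (s.cost α β β w) ≤ c * α + β * t.size w :=
      max_le htc (hsc.trans (by gcongr))
    rw [cost]; linarith
  · refine ⟨node s t, ⟨hs, ht, hd.symm⟩, union_comm _ _, ?_⟩
    have : max (s.cost α β β w) (t.cost α β β w) ≤ c * α + β * s.size w :=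
      max_le hsc (htc.trans (by gcongr))
    rw [cost]; linarith

theorem exists_cost_le_clog_s8 (hα : 0 ≤ α) (hβ : 0 ≤ β) (w : Fin n → ℝ) {S : Finset (Fin n)}
    (hS : S.Nonempty) :
    ∃ T : GTree n, T.valid ∧ T.members = S ∧
      T.cost α β β w ≤ Nat.clog 2 #S * α + β * ∑ i ∈ S, w i := by
  induction S using Finset.strongInduction with
  | H S ih =>
  rcases le_or_gt #S 1 with hS1 | hS1
  · obtain ⟨i, rfl⟩ := card_eq_one.mp (le_antisymm hS1 hS.card_pos)
    exact ⟨leaf i, trivial, rfl, by simp [cost]⟩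
  obtain ⟨S₁, hS₁S, hS₁⟩ := exists_subset_card_eq (show (#S + 1) / 2 ≤ #S by omega)
  have hS₂ : #(S \ S₁) = #S - (#S + 1) / 2 := by rw [card_sdiff_of_subset hS₁S, hS₁]
  have hS₁ne : S₁.Nonempty := card_pos.mp (by omega)
  have hS₂ne : (S \ S₁).Nonempty := card_pos.mp (by omega)
  have hd : Disjoint S₁ (S \ S₁) := disjoint_sdiff
  obtain ⟨t, ht, rfl, htc⟩ :=
    ih S₁ (ssubset_of_subset_of_ne hS₁S (by rintro rfl; simp at hS₂ne)) hS₁ne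
  obtain ⟨s, hs, hsm, hsc⟩ := ih (S \ t.members) (sdiff_ssubset hS₁S hS₁ne) hS₂ne
  have hclog : Nat.clog 2 #S = Nat.clog 2 #t.members + 1 := by
    rw [Nat.clog_of_two_le one_lt_two hS1, hS₁]; rfl
  have hclog₂ : Nat.clog 2 #(S \ t.members) ≤ Nat.clog 2 #t.members :=
    Nat.clog_mono_right 2 (by omega)
  rw [← size_eq_sum w ht] at htc
  replace hsc : s.cost α β β w ≤ Nat.clog 2 #t.members * α + β * s.size w := by
    rw [size_eq_sum w hs, hsm]
    exact hsc.trans (by gcongr)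
  obtain ⟨T, hT, hTm, hTc⟩ := exists_join_cost_le hβ ht hs (hsm ▸ hd) htc hsc
  refine ⟨T, hT, by rw [hTm, hsm, union_sdiff_of_subset hS₁S], ?_⟩
  rwa [hclog, ← union_sdiff_of_subset hS₁S, sum_union hd, ← hsm, ← size_eq_sum w ht,
    ← size_eq_sum w hs, Nat.cast_succ]

end Cost

def reductionTree (q r j : Fin n) (a b : GTree n) : GTree n :=
  node (node (leaf q) a) (node (node (leaf r) (leaf j)) b)

variable {q r j : Fin n} {a b : GTree n}

theorem members_reductionTree :
    (reductionTree q r j a b).members = insert q a.members ∪ insert r (insert j b.members) := by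
  simp only [reductionTree, members, insert_eq, union_assoc]

theorem valid_reductionTree (ha : a.valid) (hb : b.valid) (hq : q ∉ a.members)
    (hr : r ∉ insert j b.members) (hj : j ∉ b.members)
    (hd : Disjoint (insert q a.members) (insert r (insert j b.members))) :
    (reductionTree q r j a b).valid := by
  rw [mem_insert, not_or] at hr
  refine ⟨⟨trivial, ha, disjoint_singleton_left.mpr hq⟩,
    ⟨⟨trivial, trivial, disjoint_singleton.mpr hr.1⟩, hb, ?_⟩, ?_⟩
  · simpa [members, disjoint_union_left] using ⟨hr.2, hj⟩
  · simpa only [members, insert_eq, union_assoc] using hd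

theorem cost_reductionTree {α : ℝ} {w : Fin n → ℝ} (hj : w j ≤ w r)
    (ha : a.cost α 1 1 w ≤ w q) (hb : b.cost α 1 1 w ≤ w r + α + w j)
    (hba : w r + α + w j + α + b.size w ≤ w q + α + a.size w) :
    (reductionTree q r j a b).cost α 1 1 w = w q + α + a.size w + α + (w r + w j + b.size w) := by
  have hrj : (node (leaf r) (leaf j)).cost α 1 1 w = w r + α + w j := by
    rw [cost_node_of_le] <;> simp [cost, size, hj]
  have hB : (node (node (leaf r) (leaf j)) b).cost α 1 1 w = w r + α + w j + α + b.size w := by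
    rw [cost_node_of_le, hrj, one_mul]
    rwa [hrj]
  have hA : (node (leaf q) a).cost α 1 1 w = w q + α + a.size w := by
    rw [cost_node_of_le] <;> simp [cost, ha]
  rw [reductionTree, cost_node_of_le, hA]
  · simp only [size, one_mul]
  · rwa [hA, hB]

end GTree

theorem Finset.one_lt_card_of_sum_eq {ι : Type*} {s : Finset ι} {f : ι → ℕ} {N : ℕ}
    (hs : ∑ i ∈ s, f i = N) (hN : 0 < N) (hf : ∀ i ∈ s, f i < N) : 1 < #s := by
  by_contra! h
  obtain rfl | ⟨i, hi⟩ := s.eq_empty_or_nonempty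
  · simp at hs; omega
  · rw [eq_singleton_iff_unique_mem.mpr ⟨hi, fun x hx => card_le_one.mp h x hx i hi⟩,
      sum_singleton] at hs
    exact (hf i hi).ne hs

theorem Nat.clog_lt_self (b : ℕ) {x : ℕ} (hx : x ≠ 0) : Nat.clog b x < x := by
  rcases le_or_gt b 1 with hb | hb
  · rw [Nat.clog_of_left_le_one hb]; omega
  have : x ≤ b ^ (x - 1) := calc
    x ≤ 2 ^ (x - 1) := by have := Nat.lt_two_pow_self (n := x - 1); omega
    _ ≤ b ^ (x - 1) := Nat.pow_le_pow_left hb _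
  have := Nat.clog_le_of_le_pow this
  omega

theorem clog_two_mul_add_mul_lt {α : ℝ} (hα : 0 < α) {r k : ℕ} (hr : r ≠ 0) (hk : 2 * r ≤ k) :
    (Nat.clog 2 r : ℝ) * α + r * α < k * α := by
  rw [← add_mul]
  gcongr
  exact_mod_cast (show Nat.clog 2 r + r < k by have := Nat.clog_lt_self 2 hr; omega)

section Reduction

variable {p : ℕ}

theorem notMem_map_castAddEmb_two {x : Fin (p + 2)} (hx : p ≤ x) (s : Finset (Fin p)) :
    x ∉ s.map (Fin.castAddEmb 2) := by
  simp only [mem_map, Fin.castAddEmb_apply, not_exists, not_and, Fin.ext_iff, Fin.val_castAdd]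
  intro i _; omega

theorem disjoint_insert_map_castAddEmb_two (R : Finset (Fin p)) :
    Disjoint (insert ⟨p + 1, by omega⟩ (R.map (Fin.castAddEmb 2)))
      (insert ⟨p, by omega⟩ (Rᶜ.map (Fin.castAddEmb 2))) := by
  rw [disjoint_insert_left, disjoint_insert_right, mem_insert, not_or]
  exact ⟨⟨by simp [Fin.ext_iff], notMem_map_castAddEmb_two (Nat.le_succ p) _⟩,
    notMem_map_castAddEmb_two le_rfl _, (disjoint_map _).mpr disjoint_compl_right⟩

theorem univ_eq_insert_insert_map_castAddEmb_two :
    (univ : Finset (Fin (p + 2))) =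
      insert ⟨p + 1, by omega⟩ (insert ⟨p, by omega⟩ (univ.map (Fin.castAddEmb 2))) := by
  ext x
  simp only [mem_univ, mem_insert, mem_map, true_and, Fin.ext_iff, true_iff]
  by_cases h : x.val < p
  · exact .inr (.inr ⟨⟨x, h⟩, rfl⟩)
  · omega

theorem exists_gatherTree_map_castAddEmb_two {α : ℝ} (hα : 0 ≤ α) {m : Fin p → ℕ}
    {m' : Fin (p + 2) → ℝ} (hm' : ∀ i, m' (Fin.castAdd 2 i) = m i + α) {S : Finset (Fin p)}
    (hS : S.Nonempty) :
    ∃ T : GTree (p + 2), T.valid ∧ T.members = S.map (Fin.castAddEmb 2) ∧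
      T.size m' = ∑ i ∈ S, (m i : ℝ) + #S * α ∧
      T.cost α 1 1 m' ≤ Nat.clog 2 #S * α + (∑ i ∈ S, (m i : ℝ) + #S * α) := by
  have hsum : ∑ x ∈ S.map (Fin.castAddEmb 2), m' x = ∑ i ∈ S, (m i : ℝ) + #S * α := by
    simp [sum_map, hm', sum_add_distrib]
  obtain ⟨T, hT, hTm, hTc⟩ :=
    GTree.exists_cost_le_clog_s8 hα zero_le_one m' (hS.map (f := Fin.castAddEmb 2))
  refine ⟨T, hT, hTm, by rw [GTree.size_eq_sum m' hT, hTm, hsum], ?_⟩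
  simpa [hsum] using hTc

theorem valid_reductionTree_castAddEmb_two {R : Finset (Fin p)} {j : Fin p} (hj : j ∈ Rᶜ)
    {a b : GTree (p + 2)} (ha : a.valid) (hb : b.valid)
    (ham : a.members = R.map (Fin.castAddEmb 2))
    (hbm : b.members = (Rᶜ.erase j).map (Fin.castAddEmb 2)) :
    (GTree.reductionTree ⟨p + 1, by omega⟩ ⟨p, by omega⟩ (Fin.castAddEmb 2 j) a b).valid ∧
      (GTree.reductionTree ⟨p + 1, by omega⟩ ⟨p, by omega⟩ (Fin.castAddEmb 2 j) a b).members =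
        univ := by
  have hjb : insert (Fin.castAddEmb 2 j) b.members = Rᶜ.map (Fin.castAddEmb 2) := by
    rw [hbm, ← map_insert, insert_erase hj]
  refine ⟨GTree.valid_reductionTree ha hb ?_ ?_ (by simp [hbm]) ?_, ?_⟩
  · rw [ham]; exact notMem_map_castAddEmb_two (Nat.le_succ p) R
  · rw [hjb]; exact notMem_map_castAddEmb_two le_rfl _
  · rw [ham, hjb]; exact disjoint_insert_map_castAddEmb_two R
  · rw [GTree.members_reductionTree, ham, hjb, univ_eq_insert_insert_map_castAddEmb_two,
      ← union_compl R, map_union]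
    ext
    simp only [mem_insert, mem_union]
    tauto

theorem exists_reductionTree {N : ℕ} {m : Fin p → ℕ} {R : Finset (Fin p)} {α : ℝ}
    {m' : Fin (p + 2) → ℝ} (hα0 : 0 < α) (hpα : (p : ℝ) * α = 1) (hpos : ∀ i, 0 < m i)
    (hsmall : ∀ i, m i < N) (hN : 0 < N) (hR : ∑ i ∈ R, m i = N) (hRc : ∑ i ∈ Rᶜ, m i = N)
    (hfast : (Nat.clog 2 #R : ℝ) * α + #R * α < 1)
    (hm' : ∀ i, m' (Fin.castAdd 2 i) = m i + α)
    (hmp : m' ⟨p, by omega⟩ = N) (hmp1 : m' ⟨p + 1, by omega⟩ = N + 1) :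
    ∃ T : GTree (p + 2), T.valid ∧ T.members = univ ∧ T.root = ⟨p + 1, by omega⟩ ∧
      T.cost α 1 1 m' = 4 * N + 2 + 2 * α := by
  have hR1 := one_lt_card_of_sum_eq hR hN fun i _ => hsmall i
  have hRc1 := one_lt_card_of_sum_eq hRc hN fun i _ => hsmall i
  obtain ⟨j, hj⟩ := card_pos.mp hRc1.pos
  set S := Rᶜ.erase j
  have hcardN : #R + #S + 1 = p := by
    rw [card_erase_of_mem hj, card_compl, Fintype.card_fin]
    rw [card_compl, Fintype.card_fin] at hRc1
    omega
  have hS : S.Nonempty := card_pos.mp (by rw [card_erase_of_mem hj]; omega)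
  obtain ⟨a, ha, ham, has, hac⟩ :=
    exists_gatherTree_map_castAddEmb_two hα0.le hm' (card_pos.mp hR1.pos)
  obtain ⟨b, hb, hbm, hbs, hbc⟩ := exists_gatherTree_map_castAddEmb_two hα0.le hm' hS
  obtain ⟨hT, hTm⟩ := valid_reductionTree_castAddEmb_two hj ha hb ham hbm
  refine ⟨_, hT, hTm, rfl, ?_⟩
  have hwj : m' (Fin.castAddEmb 2 j) = m j + α := hm' j
  have hmj : (1 : ℝ) ≤ m j := by exact_mod_cast hpos j
  have hmjN : (m j : ℝ) + 1 ≤ N := by exact_mod_cast hsmall j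
  have hRsum : ∑ i ∈ R, (m i : ℝ) = N := by exact_mod_cast hR
  have hSsum : (m j : ℝ) + ∑ i ∈ S, (m i : ℝ) = N := by
    exact_mod_cast (add_sum_erase _ _ hj).trans hRc
  have hcard : (#R : ℝ) * α + #S * α + α = 1 := by
    have h : ((#R + #S + 1 : ℕ) : ℝ) = p := congrArg _ hcardN
    push_cast at h
    rw [← hpα, ← h]; ring
  have hSfast : (Nat.clog 2 #S : ℝ) * α + #S * α < 2 := by
    have := clog_two_mul_add_mul_lt hα0 hS.card_pos.ne' (k := 2 * p) (by omega)
    push_cast at this; linarith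
  have hrα : α ≤ #R * α := le_mul_of_one_le_left hα0.le (by exact_mod_cast hR1.le)
  have hSα : 0 ≤ (#S : ℝ) * α := by positivity
  rw [GTree.cost_reductionTree (by rw [hwj, hmp]; linarith) (by rw [hmp1]; linarith)
    (by rw [hmp, hwj]; linarith) (by rw [hmp, hwj, hmp1, has, hbs]; linarith),
    hmp1, hmp, hwj, has, hbs]
  linarith

end Reduction

/-- The 'if' direction of the NP-hardness reduction: given a PARTITION solution `R` with
`∑_{i ∈ R} m i = M/2` and `|R| ≤ p/2`, with `α = 1/p`, `β = γ = 1`,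
`m'_i = m_i + α`, `m'_p = M/2`, `m'_{p+1} = M/2 + 1`, one has
`⌈log₂ |R|⌉ * α + |R| * α + ∑_{i ∈ R} m i < M/2 + 1`, and there is a gather tree rooted
at processor `p + 1` with completion cost exactly `2M + 2 + 2α`. -/
theorem stmt_8 (p : ℕ) (hp : 1 ≤ p) (m : Fin p → ℕ) (hpos : ∀ i, 0 < m i)
    (M : ℕ) (hM : M = ∑ i, m i) (heven : 2 ∣ M) (hsmall : ∀ i, ¬ M / 2 ≤ m i)
    (R : Finset (Fin p)) (hR : ∑ i ∈ R, m i = M / 2) (hRcard : 2 * R.card ≤ p)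
    (α : ℝ) (hα : α = 1 / (p : ℝ))
    (m' : Fin (p + 2) → ℝ)
    (hm' : ∀ i : Fin p, m' (Fin.castAdd 2 i) = (m i : ℝ) + α)
    (hmp : m' ⟨p, by omega⟩ = (M : ℝ) / 2)
    (hmp1 : m' ⟨p + 1, by omega⟩ = (M : ℝ) / 2 + 1) :
    (Nat.clog 2 R.card : ℝ) * α + (R.card : ℝ) * α + ∑ i ∈ R, (m i : ℝ) <
        (M : ℝ) / 2 + 1 ∧
    ∃ T : GTree (p + 2), T.valid ∧ T.members = Finset.univ ∧
      T.root = ⟨p + 1, by omega⟩ ∧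
      T.cost α 1 1 m' = 2 * (M : ℝ) + 2 + 2 * α := by
  obtain ⟨N, rfl⟩ := heven
  simp only [Nat.mul_div_cancel_left N two_pos, not_le] at hR hsmall
  have hhalf : ((2 * N : ℕ) : ℝ) / 2 = N := by push_cast; ring
  rw [hhalf] at hmp hmp1 ⊢
  have hN : 0 < N := (Nat.zero_le _).trans_lt (hsmall ⟨0, hp⟩)
  have hRc : ∑ i ∈ Rᶜ, m i = N := by have := sum_add_sum_compl R m; omega
  have hα0 : 0 < α := by rw [hα]; positivity
  have hpα : (p : ℝ) * α = 1 := by rw [hα]; field_simp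
  have hR0 : #R ≠ 0 := (one_lt_card_of_sum_eq hR hN fun i _ => hsmall i).pos.ne'
  have hfast : (Nat.clog 2 #R : ℝ) * α + #R * α < 1 :=
    hpα ▸ clog_two_mul_add_mul_lt hα0 hR0 hRcard
  have hRsum : ∑ i ∈ R, (m i : ℝ) = N := by exact_mod_cast hR
  refine ⟨by linarith, ?_⟩
  obtain ⟨T, hT, hTm, hTr, hTc⟩ :=
    exists_reductionTree hα0 hpα hpos hsmall hN hR hRc hfast hm' hmp hmp1
  exact ⟨T, hT, hTm, hTr, by rw [hTc]; push_cast; ring⟩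
end

section
/- Define the homogeneous ordered-tree dynamic programming table by C[i,i] = 0 and, for i < j, C[i,j] = min over i ≤ k < j of max(C[i,k], C[k+1,j]) + min(comm(S[i,k]), comm(S[k+1,j])), where comm(s) = α + β·s and S[i,k] = ∑_{t=i}^{k} m_t (ignoring local copy costs, γ = 0). Then C[0,p−1] ≤ ⌈log₂ p⌉·α + β·∑_{i=0}^{p−1} m_i. -/
/-!
Split `[i, j]` into halves of sizes `⌈n/2⌉` and `⌊n/2⌋`, where `n = j - i + 1`. Each half has a
tree of latency at most `(⌈log₂ n⌉ - 1)·α` plus `β` times its own volume; joining them costs one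
more `α` plus `β` times the smaller volume, and the larger plus the smaller volume is the total.
By induction on `n`, `C[i,j] ≤ ⌈log₂ n⌉·α + β·S[i,j]`.
-/

open Finset

/-- Sum of block sizes over the consecutive processor range `[i, k]`. -/
noncomputable def segSum (m : ℕ → ℝ) (i k : ℕ) : ℝ := ∑ t ∈ Finset.Icc i k, m t

/-- Homogeneous ordered-tree dynamic programming table (Figure 5, `γ = 0`):
`C[i,i] = 0` and, for `i < j`,
`C[i,j] = min_{i ≤ k < j} [max(C[i,k], C[k+1,j]) + min(α + β*S[i,k], α + β*S[k+1,j])]`. -/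
noncomputable def dpC (m : ℕ → ℝ) (α β : ℝ) : ℕ → ℕ → ℝ
  | i, j =>
    if h : j ≤ i then 0
    else
      ((Finset.Ico i j).attach.inf'
        (Finset.attach_nonempty_iff.mpr (by rw [Finset.nonempty_Ico]; omega)))
        fun k =>
          have hk := Finset.mem_Ico.mp k.2
          max (dpC m α β i k.1) (dpC m α β (k.1 + 1) j) +
            min (α + β * segSum m i k.1) (α + β * segSum m (k.1 + 1) j)
termination_by i j => j - i
decreasing_by
  · omega
  · omega

lemma segSum_nonneg {m : ℕ → ℝ} (hm : ∀ t, 0 ≤ m t) (i k : ℕ) : 0 ≤ segSum m i k :=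
  sum_nonneg fun t _ => hm t

lemma segSum_split (m : ℕ → ℝ) {i k j : ℕ} (hik : i ≤ k) (hkj : k < j) :
    segSum m i j = segSum m i k + segSum m (k + 1) j := by
  simp only [segSum, ← Ico_add_one_right_eq_Icc]
  exact (sum_Ico_consecutive m (by omega : i ≤ k + 1) (by omega : k + 1 ≤ j + 1)).symm

lemma dpC_of_le (m : ℕ → ℝ) (α β : ℝ) {i j : ℕ} (h : j ≤ i) : dpC m α β i j = 0 := by
  rw [dpC, dif_pos h]

lemma dpC_le_of_mem_Ico (m : ℕ → ℝ) (α β : ℝ) {i j k : ℕ} (hk : k ∈ Ico i j) :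
    dpC m α β i j ≤ max (dpC m α β i k) (dpC m α β (k + 1) j) +
      min (α + β * segSum m i k) (α + β * segSum m (k + 1) j) := by
  rw [dpC, dif_neg (by simp only [mem_Ico] at hk; omega)]
  exact inf'_le _ (mem_attach _ ⟨k, hk⟩)

lemma Nat.clog_two_add_one_le {n l : ℕ} (hn : 2 ≤ n) (hl : 2 * l ≤ n + 1) :
    Nat.clog 2 l + 1 ≤ Nat.clog 2 n := by
  rw [Nat.clog_of_two_le one_lt_two hn]
  exact Nat.add_le_add_right (Nat.clog_mono_right 2 (by omega)) 1

/-- One merge step: the slower subtree plus the cheaper of the two final transfers. -/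
lemma max_add_min_le {a b c x y α β : ℝ} (hβ : 0 ≤ β)
    (ha : a ≤ c + β * x) (hb : b ≤ c + β * y) :
    max a b + min (α + β * x) (α + β * y) ≤ c + α + β * (x + y) := by
  have hmax : max a b ≤ c + β * max x y :=
    max_le (ha.trans (by gcongr; exact le_max_left x y))
      (hb.trans (by gcongr; exact le_max_right x y))
  have hmin : min (α + β * x) (α + β * y) ≤ α + β * min x y := by
    rcases le_total x y with h | h <;> simp [h]
  calc max a b + min (α + β * x) (α + β * y)
      ≤ (c + β * max x y) + (α + β * min x y) := add_le_add hmax hmin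
    _ = c + α + β * (x + y) := by rw [← max_add_min x y]; ring

theorem dpC_le_clog {m : ℕ → ℝ} (hm : ∀ t, 0 ≤ m t) {α β : ℝ} (hα : 0 ≤ α) (hβ : 0 ≤ β)
    (i j : ℕ) :
    dpC m α β i j ≤ Nat.clog 2 (j - i + 1) * α + β * segSum m i j := by
  rcases le_or_gt j i with hji | hij
  · rw [dpC_of_le m α β hji]
    exact add_nonneg (by positivity) (mul_nonneg hβ (segSum_nonneg hm i j))
  set k := (i + j) / 2
  have hk : k ∈ Ico i j := mem_Ico.mpr ⟨by omega, by omega⟩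
  have halve : ∀ {l : ℕ}, 2 * l ≤ j - i + 2 →
      (Nat.clog 2 l : ℝ) * α ≤ (Nat.clog 2 (j - i + 1) - 1) * α := fun hl =>
    mul_le_mul_of_nonneg_right (le_sub_iff_add_le.mpr
      (by exact_mod_cast Nat.clog_two_add_one_le (by omega) hl)) hα
  have hleft : dpC m α β i k ≤ (Nat.clog 2 (j - i + 1) - 1) * α + β * segSum m i k :=
    (dpC_le_clog hm hα hβ i k).trans (add_le_add_left (halve (by omega)) _)
  have hright : dpC m α β (k + 1) j ≤
      (Nat.clog 2 (j - i + 1) - 1) * α + β * segSum m (k + 1) j :=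
    (dpC_le_clog hm hα hβ (k + 1) j).trans (add_le_add_left (halve (by omega)) _)
  calc dpC m α β i j
      ≤ _ := dpC_le_of_mem_Ico m α β hk
    _ ≤ _ := max_add_min_le hβ hleft hright
    _ = _ := by rw [segSum_split m (mem_Ico.mp hk).1 (mem_Ico.mp hk).2]; ring
termination_by j - i

theorem stmt_11_general (p : ℕ) (m : ℕ → ℝ) (hm : ∀ t, 0 ≤ m t)
    (α β : ℝ) (hα : 0 ≤ α) (hβ : 0 ≤ β) :
    dpC m α β 0 (p - 1) ≤ (Nat.clog 2 p : ℝ) * α + β * ∑ i ∈ Finset.range p, m i := by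
  rcases p with _ | p
  · simp [dpC_of_le]
  · simpa [segSum, Nat.range_succ_eq_Icc_zero] using dpC_le_clog hm hα hβ 0 p

/-- The optimal ordered-tree DP value over `[0, p-1]` is at most the adaptive binomial
tree cost `⌈log₂ p⌉ * α + β * ∑_{i<p} m i`. -/
theorem stmt_11 (p : ℕ) (hp : 1 ≤ p) (m : ℕ → ℝ) (hm : ∀ t, 0 ≤ m t)
    (α β : ℝ) (hα : 0 ≤ α) (hβ : 0 ≤ β) :
    dpC m α β 0 (p - 1) ≤ (Nat.clog 2 p : ℝ) * α + β * ∑ i ∈ Finset.range p, m i :=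
  stmt_11_general p m hm α β hα hβ
end

section
/- In the Minimum Broadcast Time reduction: let G = (V, E) be an undirected graph and u ∈ V. Define α_{vw} = 1 if {v,w} ∈ E and α_{vw} = ∞ otherwise, β_{vw} = 1, message size m = 1. Then G admits a broadcast from u completing in t synchronous rounds (in each round, each informed vertex may inform one neighbor) if and only if there is a broadcast tree in the non-homogeneous one-ported linear cost model rooted at u with completion cost at most 2t, where each edge transmission costs α_{vw} + β_{vw}·1 = 2 and a vertex performs its transmissions sequentially. -/
/-!
Reading a broadcast tree as a schedule, the root of `node t s` informs the root of `s` in the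
round right after its `t.nsends` earlier sends, so the number of rounds is half the cost; and
two vertices informed by the same sender get different rounds.

Conversely, a round-by-round scheme is turned into a tree by strong induction on the set of
vertices: split off the vertices informed through the last child `c` of the root `r`. Since a
vertex sends at most once per round, all other sends of `r` happen before round `τ c`, so `r`
is free to send to `c` at cost `2 τ c`, and joining the trees of the two parts stays within
`2 t`.
-/

open Finset

/-- A broadcast tree in binary-join form: in `node t s`, the root of `t` (also the root of
the combined tree), after finishing its earlier sends in `t`, sends the unit message to the
root of `s`, which then broadcasts in `s`. -/
inductive BTree (V : Type*) : Type _ where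
  | leaf : V → BTree V
  | node : BTree V → BTree V → BTree V

namespace BTree

variable {V : Type*}

def root : BTree V → V
  | leaf v => v
  | node t _ => t.root

def members [DecidableEq V] : BTree V → Finset V
  | leaf v => {v}
  | node t s => t.members ∪ s.members

def valid [DecidableEq V] : BTree V → Prop
  | leaf _ => True
  | node t s => t.valid ∧ s.valid ∧ Disjoint t.members s.members

/-- The time at which the root of the tree finishes its own (sequential) sends,
each send costing `α + β * 1 = 1 + 1 = 2` time units. -/
def busy : BTree V → ℝ
  | leaf _ => 0
  | node t _ => t.busy + 2

/-- Completion time of the broadcast tree: the root performs its transmissions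
sequentially, each costing `2`; a child starts broadcasting in its subtree only after
receiving the message. -/
def bcost : BTree V → ℝ
  | leaf _ => 0
  | node t s => max t.bcost (t.busy + 2 + s.bcost)

/-- All tree transmissions go along edges of `G` (elsewhere the latency is `∞`). -/
def edgesOK (G : SimpleGraph V) : BTree V → Prop
  | leaf _ => True
  | node t s => t.edgesOK G ∧ s.edgesOK G ∧ G.Adj t.root s.root

end BTree

/-- `G` admits a (synchronous, telephone-model) broadcast from `u` completing within `t`
rounds: every vertex other than `u` receives the message from an informed neighbour, in
some round `≤ t`, with no vertex sending twice in the same round. -/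
def CanBroadcast {V : Type*} [Fintype V] [DecidableEq V] (G : SimpleGraph V) (u : V)
    (t : ℕ) : Prop :=
  ∃ (parent : V → V) (time : V → ℕ),
    time u = 0 ∧
    (∀ v, v ≠ u → G.Adj (parent v) v ∧ time (parent v) < time v ∧ time v ≤ t) ∧
    (∀ v w, v ≠ u → w ≠ u → v ≠ w → ¬(parent v = parent w ∧ time v = time w))

structure IsBroadcastOn {V : Type*} (G : SimpleGraph V) (S : Finset V) (r : V)
    (parent : V → V) (time : V → ℕ) : Prop where
  parent_mem : ∀ w ∈ S, w ≠ r → parent w ∈ S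
  adj : ∀ w ∈ S, w ≠ r → G.Adj (parent w) w
  time_lt : ∀ w ∈ S, w ≠ r → time (parent w) < time w
  injOn : ∀ v ∈ S, ∀ w ∈ S, v ≠ r → w ≠ r → parent v = parent w → time v = time w → v = w

theorem canBroadcast_iff {V : Type*} [Fintype V] [DecidableEq V] (G : SimpleGraph V) (u : V)
    (t : ℕ) :
    CanBroadcast G u t ↔ ∃ (parent : V → V) (time : V → ℕ),
      time u = 0 ∧ IsBroadcastOn G univ u parent time ∧ ∀ w, time w ≤ t := by
  constructor
  · rintro ⟨p, τ, hu, hstep, hdist⟩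
    refine ⟨p, τ, hu, ⟨fun w _ _ => mem_univ _, fun w _ hw => (hstep w hw).1,
      fun w _ hw => (hstep w hw).2.1, fun v _ w _ hv hw hp hτ => ?_⟩, fun w => ?_⟩
    · by_contra hvw
      exact hdist v w hv hw hvw ⟨hp, hτ⟩
    · by_cases hw : w = u
      · simp [hw, hu]
      · exact (hstep w hw).2.2
  · rintro ⟨p, τ, hu, h, ht⟩
    refine ⟨p, τ, hu, fun v hv => ⟨h.adj v (mem_univ v) hv, h.time_lt v (mem_univ v) hv, ht v⟩,
      fun v w hv hw hvw hpτ => hvw (h.injOn v (mem_univ v) w (mem_univ w) hv hw hpτ.1 hpτ.2)⟩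

namespace BTree

variable {V : Type*}

def nsends : BTree V → ℕ
  | leaf _ => 0
  | node t _ => t.nsends + 1

theorem busy_eq_two_mul_nsends (T : BTree V) : T.busy = 2 * T.nsends := by
  induction T with
  | leaf => simp [busy, nsends]
  | node t s iht => simp [busy, nsends, iht]; ring

variable [DecidableEq V]

theorem root_mem (T : BTree V) : T.root ∈ T.members := by
  induction T with
  | leaf v => exact mem_singleton_self v
  | node t s iht => exact mem_union_left _ iht

theorem root_not_mem_of_valid_node {t s : BTree V} (h : (node t s).valid) :
    t.root ∉ s.members :=
  disjoint_left.1 h.2.2 t.root_mem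

def sender : BTree V → V → V
  | leaf v, _ => v
  | node t s, w =>
    if w ∈ s.members then (if w = s.root then t.root else s.sender w) else t.sender w

/-- The round in which `w` is informed when the root is informed in round `o`. -/
def recvTime : BTree V → ℕ → V → ℕ
  | leaf _, o, _ => o
  | node t s, o, w =>
    if w ∈ s.members then s.recvTime (o + t.nsends + 1) w else t.recvTime o w

theorem recvTime_root {T : BTree V} (hT : T.valid) (o : ℕ) : T.recvTime o T.root = o := by
  induction T generalizing o with
  | leaf => rfl
  | node t s iht =>
    rw [root, recvTime, if_neg (root_not_mem_of_valid_node hT)]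
    exact iht hT.1 o

theorem sender_mem {T : BTree V} (hT : T.valid) {w : V} (hw : w ∈ T.members)
    (hwr : w ≠ T.root) : T.sender w ∈ T.members := by
  induction T with
  | leaf => exact absurd (mem_singleton.1 hw) hwr
  | node t s iht ihs =>
    simp only [members, root, sender] at hw hwr ⊢
    split_ifs with hws hwsr
    · exact mem_union_left _ t.root_mem
    · exact mem_union_right _ (ihs hT.2.1 hws hwsr)
    · exact mem_union_left _ (iht hT.1 ((mem_union.1 hw).resolve_right hws) hwr)

theorem adj_sender {G : SimpleGraph V} {T : BTree V} (hE : T.edgesOK G) {w : V}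
    (hw : w ∈ T.members) (hwr : w ≠ T.root) : G.Adj (T.sender w) w := by
  induction T with
  | leaf => exact absurd (mem_singleton.1 hw) hwr
  | node t s iht ihs =>
    simp only [members, root, sender] at hw hwr ⊢
    split_ifs with hws hwsr
    · exact hwsr ▸ hE.2.2
    · exact ihs hE.2.1 hws hwsr
    · exact iht hE.1 ((mem_union.1 hw).resolve_right hws) hwr

theorem recvTime_sender_lt {T : BTree V} (hT : T.valid) (o : ℕ) {w : V} (hw : w ∈ T.members)
    (hwr : w ≠ T.root) : T.recvTime o (T.sender w) < T.recvTime o w := by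
  induction T generalizing o with
  | leaf => exact absurd (mem_singleton.1 hw) hwr
  | node t s iht ihs =>
    simp only [members, root, sender] at hw hwr ⊢
    split_ifs with hws hwsr
    · rw [recvTime, recvTime, if_neg (root_not_mem_of_valid_node hT), if_pos hws, recvTime_root hT.1,
        hwsr, recvTime_root hT.2.1]
      omega
    · rw [recvTime, recvTime, if_pos (sender_mem hT.2.1 hws hwsr), if_pos hws]
      exact ihs hT.2.1 _ hws hwsr
    · have hwt := (mem_union.1 hw).resolve_right hws
      have hsw := disjoint_left.1 hT.2.2 (sender_mem hT.1 hwt hwr)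
      rw [recvTime, recvTime, if_neg hsw, if_neg hws]
      exact iht hT.1 o hwt hwr

theorem two_mul_recvTime_le {T : BTree V} (o : ℕ) {w : V} (hw : w ∈ T.members) :
    2 * (T.recvTime o w : ℝ) ≤ 2 * o + T.bcost := by
  induction T generalizing o with
  | leaf => simp [recvTime, bcost]
  | node t s iht ihs =>
    simp only [members, recvTime, bcost] at hw ⊢
    split_ifs with hws
    · have := ihs (o + t.nsends + 1) hws
      have := le_max_right t.bcost (t.busy + 2 + s.bcost)
      rw [busy_eq_two_mul_nsends] at *
      push_cast at *
      linarith
    · have := iht o ((mem_union.1 hw).resolve_right hws)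
      have := le_max_left t.bcost (t.busy + 2 + s.bcost)
      linarith

theorem recvTime_le_of_sender_eq_root {T : BTree V} (hT : T.valid) (o : ℕ) {w : V}
    (hw : w ∈ T.members) (hwr : w ≠ T.root) (hsw : T.sender w = T.root) :
    T.recvTime o w ≤ o + T.nsends := by
  induction T generalizing o with
  | leaf => exact absurd (mem_singleton.1 hw) hwr
  | node t s iht ihs =>
    simp only [members, root, sender, recvTime, nsends] at hw hwr hsw ⊢
    split_ifs at hsw ⊢ with hws hwsr
    · rw [hwsr, recvTime_root hT.2.1]
      omega
    · exact absurd (hsw ▸ sender_mem hT.2.1 hws hwsr) (root_not_mem_of_valid_node hT)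
    · have := iht hT.1 o ((mem_union.1 hw).resolve_right hws) hwr hsw
      omega

theorem sender_node_eq_root_iff {t s : BTree V} (h : (node t s).valid) {v : V}
    (hv : v ∈ s.members) : (node t s).sender v = t.root ↔ v = s.root := by
  rw [sender, if_pos hv]
  split_ifs with hvr
  · exact iff_of_true rfl hvr
  · exact iff_of_false (fun hsv => root_not_mem_of_valid_node h (hsv ▸ sender_mem h.2.1 hv hvr))
      hvr

theorem sender_recvTime_ne_of_mem_right {t s : BTree V} (h : (node t s).valid) (o : ℕ)
    {v w : V} (hv : v ∈ s.members) (hw : w ∈ t.members) (hws : w ∉ s.members)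
    (hwr : w ≠ t.root) (hs : (node t s).sender v = (node t s).sender w) :
    (node t s).recvTime o v ≠ (node t s).recvTime o w := by
  by_cases hvr : v = s.root
  · have hsw : t.sender w = t.root := by
      rw [← (sender_node_eq_root_iff h hv).2 hvr, hs, sender, if_neg hws]
    have := recvTime_le_of_sender_eq_root h.1 o hw hwr hsw
    rw [recvTime, recvTime, if_pos hv, if_neg hws, hvr, recvTime_root h.2.1]
    omega
  · rw [sender, sender, if_pos hv, if_neg hvr, if_neg hws] at hs
    exact absurd (hs ▸ sender_mem h.1 hw hwr)
      (disjoint_right.1 h.2.2 (sender_mem h.2.1 hv hvr))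

theorem eq_of_sender_eq_of_recvTime_eq {T : BTree V} (hT : T.valid) (o : ℕ) {v w : V}
    (hv : v ∈ T.members) (hw : w ∈ T.members) (hvr : v ≠ T.root) (hwr : w ≠ T.root)
    (hs : T.sender v = T.sender w) (hτ : T.recvTime o v = T.recvTime o w) : v = w := by
  induction T generalizing o with
  | leaf => exact (mem_singleton.1 hv).trans (mem_singleton.1 hw).symm
  | node t s iht ihs =>
    simp only [members, mem_union, root] at hv hw hvr hwr
    by_cases hvs : v ∈ s.members <;> by_cases hws : w ∈ s.members
    · by_cases hvsr : v = s.root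
      · rw [hvsr, ← (sender_node_eq_root_iff hT hws).1 (hs ▸ (sender_node_eq_root_iff hT hvs).2 hvsr)]
      have hwsr : w ≠ s.root := fun hwsr =>
        hvsr ((sender_node_eq_root_iff hT hvs).1 (hs.trans ((sender_node_eq_root_iff hT hws).2 hwsr)))
      rw [sender, sender, if_pos hvs, if_pos hws, if_neg hvsr, if_neg hwsr] at hs
      rw [recvTime, recvTime, if_pos hvs, if_pos hws] at hτ
      exact ihs hT.2.1 _ hvs hws hvsr hwsr hs hτ
    · exact absurd hτ (sender_recvTime_ne_of_mem_right hT o hvs (hw.resolve_right hws) hws hwr hs)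
    · exact absurd hτ.symm
        (sender_recvTime_ne_of_mem_right hT o hws (hv.resolve_right hvs) hvs hvr hs.symm)
    · rw [sender, sender, if_neg hvs, if_neg hws] at hs
      rw [recvTime, recvTime, if_neg hvs, if_neg hws] at hτ
      exact iht hT.1 o (hv.resolve_right hvs) (hw.resolve_right hws) hvr hwr hs hτ

theorem isBroadcastOn {G : SimpleGraph V} {T : BTree V} (hT : T.valid) (hE : T.edgesOK G)
    (o : ℕ) : IsBroadcastOn G T.members T.root T.sender (T.recvTime o) where
  parent_mem _ := sender_mem hT
  adj _ := adj_sender hE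
  time_lt _ := recvTime_sender_lt hT o
  injOn _ hv _ hw hvr hwr := eq_of_sender_eq_of_recvTime_eq hT o hv hw hvr hwr

end BTree

section Descendants

variable {V : Type*} {S : Finset V} {r c : V} {p : V → V}

open Classical in
/-- The vertices of `S` informed through `c`: those reached from `c` along parent links
that never pass through the root `r` (whose own `parent` value is meaningless). -/
noncomputable def descendants (S : Finset V) (r : V) (p : V → V) (c : V) : Finset V :=
  S.filter (Relation.ReflTransGen (fun a b => b ≠ r ∧ p b = a) c)

theorem mem_descendants {w : V} :
    w ∈ descendants S r p c ↔ w ∈ S ∧ Relation.ReflTransGen (fun a b => b ≠ r ∧ p b = a) c w := by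
  classical exact mem_filter

theorem descendants_subset : descendants S r p c ⊆ S := fun _ hw => (mem_descendants.1 hw).1

theorem self_mem_descendants (hc : c ∈ S) : c ∈ descendants S r p c :=
  mem_descendants.2 ⟨hc, .refl⟩

theorem root_not_mem_descendants (hcr : c ≠ r) : r ∉ descendants S r p c := by
  intro hr
  rcases (mem_descendants.1 hr).2.cases_tail with h | ⟨_, _, hrr, _⟩
  · exact hcr h.symm
  · exact hrr rfl

end Descendants

namespace IsBroadcastOn

variable {V : Type*} {G : SimpleGraph V} {S : Finset V} {r c : V} {p : V → V} {τ : V → ℕ}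

theorem restrict (h : IsBroadcastOn G S r p τ) {S' : Finset V} {r' : V} (hS : S' ⊆ S)
    (hS' : ∀ w ∈ S', w ≠ r' → w ≠ r ∧ p w ∈ S') : IsBroadcastOn G S' r' p τ where
  parent_mem w hw hr := (hS' w hw hr).2
  adj w hw hr := h.adj w (hS hw) (hS' w hw hr).1
  time_lt w hw hr := h.time_lt w (hS hw) (hS' w hw hr).1
  injOn v hv w hw hvr hwr := h.injOn v (hS hv) w (hS hw) (hS' v hv hvr).1 (hS' w hw hwr).1

theorem eq_singleton_of_forall_parent_ne (h : IsBroadcastOn G S r p τ) (hr : r ∈ S)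
    (hp : ∀ w ∈ S, w ≠ r → p w ≠ r) : S = {r} := by
  refine eq_singleton_iff_unique_mem.2 ⟨hr, fun w => ?_⟩
  induction hτ : τ w using Nat.strong_induction_on generalizing w with
  | _ n ih =>
    intro hw
    by_contra hwr
    exact hp w hw hwr (ih _ (hτ ▸ h.time_lt w hw hwr) (p w) rfl (h.parent_mem w hw hwr))

theorem restrict_descendants (h : IsBroadcastOn G S r p τ) (hcr : c ≠ r) :
    IsBroadcastOn G (descendants S r p c) c p τ := by
  refine h.restrict descendants_subset fun w hw hwc => ?_
  have hwr : w ≠ r := fun hwr => root_not_mem_descendants hcr (hwr ▸ hw)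
  obtain ⟨hwS, hcw⟩ := mem_descendants.1 hw
  rcases hcw.cases_tail with h' | ⟨b, hcb, -, hpb⟩
  · exact absurd h' hwc
  · exact ⟨hwr, mem_descendants.2 ⟨h.parent_mem w hwS hwr, hpb ▸ hcb⟩⟩

theorem restrict_sdiff_descendants [DecidableEq V] (h : IsBroadcastOn G S r p τ) :
    IsBroadcastOn G (S \ descendants S r p c) r p τ := by
  refine h.restrict sdiff_subset fun w hw hwr => ⟨hwr, ?_⟩
  obtain ⟨hwS, hwD⟩ := mem_sdiff.1 hw
  refine mem_sdiff.2 ⟨h.parent_mem w hwS hwr, fun hpD => hwD ?_⟩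
  exact mem_descendants.2 ⟨hwS, (mem_descendants.1 hpD).2.tail ⟨hwr, rfl⟩⟩

theorem exists_bTree [DecidableEq V] {B : ℕ} (h : IsBroadcastOn G S r p τ) (hr : r ∈ S)
    (hB : ∀ w ∈ S, τ w ≤ B) :
    ∃ T : BTree V, T.valid ∧ T.members = S ∧ T.root = r ∧ T.edgesOK G ∧
      T.bcost ≤ 2 * ((B : ℝ) - τ r) ∧
      ∀ k : ℕ, τ r ≤ k → (∀ w ∈ S, w ≠ r → p w = r → τ w ≤ k) →
        T.busy ≤ 2 * ((k : ℝ) - τ r) := by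
  induction S using Finset.strongInduction generalizing r with
  | H S ih =>
  obtain hchild | ⟨c, hc, hmax⟩ := (S.filter fun w => w ≠ r ∧ p w = r).eq_empty_or_nonempty.imp
    id fun hne => exists_max_image _ τ hne
  · obtain rfl := h.eq_singleton_of_forall_parent_ne hr
      fun w hw hwr hpw => (filter_eq_empty_iff.1 hchild hw) ⟨hwr, hpw⟩
    have hrB : (τ r : ℝ) ≤ B := by exact_mod_cast hB r hr
    refine ⟨.leaf r, trivial, rfl, rfl, trivial, by simpa [BTree.bcost] using hrB,
      fun k hk _ => ?_⟩
    have : (τ r : ℝ) ≤ k := by exact_mod_cast hk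
    simpa [BTree.busy] using this
  obtain ⟨hcS, hcr, hpc⟩ := mem_filter.1 hc
  have hrD : r ∉ descendants S r p c := root_not_mem_descendants hcr
  have hcD : c ∈ descendants S r p c := self_mem_descendants hcS
  obtain ⟨T₂, hv₂, hm₂, hr₂, hE₂, hcost₂, -⟩ :=
    ih _ ((ssubset_iff_of_subset descendants_subset).2 ⟨r, hr, hrD⟩)
      (h.restrict_descendants hcr) hcD fun w hw => hB w (descendants_subset hw)
  obtain ⟨T₁, hv₁, hm₁, hr₁, hE₁, hcost₁, hbusy₁⟩ :=
    ih _ (sdiff_ssubset descendants_subset ⟨c, hcD⟩) h.restrict_sdiff_descendants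
      (mem_sdiff.2 ⟨hr, hrD⟩) fun w hw => hB w (mem_sdiff.1 hw).1
  have hrc : τ r < τ c := hpc ▸ h.time_lt c hcS hcr
  obtain ⟨k, hk⟩ : ∃ k, τ c = k + 1 := ⟨τ c - 1, by omega⟩
  -- the children of `r` outside the subtree of `c` are informed strictly before `c`
  have hbusy : T₁.busy + 2 ≤ 2 * ((τ c : ℝ) - τ r) := by
    have := hbusy₁ k (by omega) fun w hw hwr hpw => by
      obtain ⟨hwS, hwD⟩ := mem_sdiff.1 hw
      have hle := hmax w (mem_filter.2 ⟨hwS, hwr, hpw⟩)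
      have hne : τ w ≠ τ c := fun heq =>
        hwD (h.injOn w hwS c hcS hwr hcr (hpw.trans hpc.symm) heq ▸ hcD)
      omega
    rw [hk]; push_cast; linarith
  refine ⟨.node T₁ T₂, ⟨hv₁, hv₂, hm₁ ▸ hm₂ ▸ sdiff_disjoint⟩, ?_, hr₁,
    ⟨hE₁, hE₂, hr₁ ▸ hr₂ ▸ hpc ▸ h.adj c hcS hcr⟩, ?_, fun k' hk' hchild' => ?_⟩
  · rw [BTree.members, hm₁, hm₂, sdiff_union_of_subset descendants_subset]
  · have : (τ c : ℝ) ≤ B := by exact_mod_cast hB c hcS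
    exact max_le hcost₁ (by linarith)
  · have : (τ c : ℝ) ≤ k' := by exact_mod_cast hchild' c hcS hcr hpc
    simp only [BTree.busy]; linarith

end IsBroadcastOn

/-- Minimum Broadcast Time reduction: with `α_{vw} = 1` on edges of `G` (`∞` otherwise),
`β = 1` and unit message size, `G` admits a broadcast from `u` in `t` synchronous rounds
iff there is a broadcast tree rooted at `u` (all transmissions along edges of `G`, each
costing `2`, performed sequentially at each vertex) with completion cost at most `2t`. -/
theorem stmt_14 {V : Type*} [Fintype V] [DecidableEq V] (G : SimpleGraph V) (u : V)
    (t : ℕ) :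
    CanBroadcast G u t ↔
    ∃ T : BTree V, T.valid ∧ T.members = Finset.univ ∧ T.root = u ∧
      T.edgesOK G ∧ T.bcost ≤ 2 * (t : ℝ) := by
  rw [canBroadcast_iff]
  constructor
  · rintro ⟨p, τ, hu, h, ht⟩
    obtain ⟨T, hT, hm, hr, hE, hcost, -⟩ := h.exists_bTree (mem_univ u) fun w _ => ht w
    exact ⟨T, hT, hm, hr, hE, by simpa [hu] using hcost⟩
  · rintro ⟨T, hT, hm, rfl, hE, hcost⟩
    refine ⟨T.sender, T.recvTime 0, BTree.recvTime_root hT 0, hm ▸ BTree.isBroadcastOn hT hE 0,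
      fun w => ?_⟩
    have := BTree.two_mul_recvTime_le 0 (hm ▸ mem_univ w : w ∈ T.members)
    exact_mod_cast (by push_cast at this; linarith : (T.recvTime 0 w : ℝ) ≤ t)
end

section
/- The Multiprocessor-Scheduling reduction: given n jobs with lengths m_0,…,m_{n−1} ∈ ℕ, k machines, and deadline D, set p = n + 1, α = 0, β = 1, m_r = 0 for the extra root r. Then there is a k-ported gather schedule (blocks unsplittable, star tree rooted at r, each port receiving its assigned blocks sequentially) with completion time at most D if and only if the jobs can be partitioned into k sets each of total length at most D. -/
open Finset

/-!
A star gather schedule is an assignment of blocks to ports, and its completion time is the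
largest port load, so it meets the deadline iff every port load does. The fibres of an
assignment partition the blocks; conversely, sending each block to some part containing it
gives an assignment whose fibres lie inside the parts, hence whose loads are no larger.
-/

section Assignment

variable {ι κ M : Type*} [Fintype ι] [DecidableEq κ]

theorem pairwise_disjoint_fibers (A : ι → κ) {j j' : κ} (h : j ≠ j') :
    Disjoint (univ.filter fun i => A i = j) (univ.filter fun i => A i = j') :=
  disjoint_filter.2 fun _ _ hj hj' => h (hj.symm.trans hj')

theorem biUnion_fibers_eq_univ [Fintype κ] [DecidableEq ι] (A : ι → κ) :
    univ.biUnion (fun j => univ.filter fun i => A i = j) = univ :=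
  biUnion_filter_eq_of_maps_to fun _ _ => mem_univ _

theorem exists_assignment_fiber_subset [Fintype κ] [DecidableEq ι] (P : κ → Finset ι)
    (hP : univ.biUnion P = univ) :
    ∃ A : ι → κ, ∀ j, univ.filter (fun i => A i = j) ⊆ P j := by
  have hcover : ∀ i, ∃ j, i ∈ P j := fun i => by
    simpa using (hP.symm ▸ mem_univ i : i ∈ univ.biUnion P)
  choose A hA using hcover
  refine ⟨A, fun j i hi => ?_⟩
  obtain rfl := (mem_filter.1 hi).2
  exact hA i

theorem exists_assignment_load_le [Fintype κ] [DecidableEq ι] [AddCommMonoid M] [Preorder M]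
    [CanonicallyOrderedAdd M] (m : ι → M) (D : M) (P : κ → Finset ι)
    (hP : univ.biUnion P = univ) (hD : ∀ j, ∑ i ∈ P j, m i ≤ D) :
    ∃ A : ι → κ, ∀ j, ∑ i ∈ univ.filter (fun i => A i = j), m i ≤ D := by
  obtain ⟨A, hA⟩ := exists_assignment_fiber_subset P hP
  exact ⟨A, fun j => (sum_le_sum_of_subset (hA j)).trans (hD j)⟩

end Assignment

theorem stmt_15_general (n k D : ℕ) (m : Fin n → ℕ) :
    (∃ A : Fin n → Fin k,
        (Finset.univ.sup fun j : Fin k =>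
          ∑ i ∈ Finset.univ.filter (fun i => A i = j), m i) ≤ D) ↔
    (∃ P : Fin k → Finset (Fin n),
        (∀ j j' : Fin k, j ≠ j' → Disjoint (P j) (P j')) ∧
        Finset.univ.biUnion P = Finset.univ ∧
        ∀ j : Fin k, ∑ i ∈ P j, m i ≤ D) := by
  simp only [Finset.sup_le_iff, mem_univ, true_implies]
  constructor
  · rintro ⟨A, hA⟩
    exact ⟨fun j => univ.filter fun i => A i = j, fun _ _ => pairwise_disjoint_fibers A,
      biUnion_fibers_eq_univ A, hA⟩
  · rintro ⟨P, -, hP, hD⟩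
    exact exists_assignment_load_le m D P hP hD

/-- Multiprocessor-Scheduling reduction: with `α = 0`, `β = 1`, a zero-size block at the
extra root and blocks unsplittable, a `k`-ported star gather schedule (an assignment `A` of
blocks to ports, each port receiving its blocks sequentially, completion time the maximum
port load) finishes within deadline `D` iff the `n` jobs with lengths `m i` can be
partitioned into `k` sets each of total length at most `D`. -/
theorem stmt_15 (n k D : ℕ) (hk : 1 ≤ k) (m : Fin n → ℕ) :
    (∃ A : Fin n → Fin k,
        (Finset.univ.sup fun j : Fin k =>
          ∑ i ∈ Finset.univ.filter (fun i => A i = j), m i) ≤ D) ↔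
    (∃ P : Fin k → Finset (Fin n),
        (∀ j j' : Fin k, j ≠ j' → Disjoint (P j) (P j')) ∧
        Finset.univ.biUnion P = Finset.univ ∧
        ∀ j : Fin k, ∑ i ∈ P j, m i ≤ D) :=
  stmt_15_general n k D m
end
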